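/- arXiv:1503.01402 — 8 statements merged into one kernel-verified Lean document; each statement's English description precedes it below -/
import Mathlib

section
/- Let Φ be an m × M real matrix whose columns Φ_1, …, Φ_M all have unit Euclidean norm, and let μ ≥ 0 be a bound on its coherence, i.e. |⟨Φ_i, Φ_j⟩| ≤ μ for all i ≠ j. Then Φ satisfies the Restricted Isometry Property of order k with constant (k−1)μ: for every x ∈ ℝ^M with at most k nonzero entries, (1 − (k−1)μ)·‖x‖₂² ≤ ‖Φx‖₂² ≤ (1 + (k−1)μ)·‖x‖₂². -/
/-- Proposition 2.1: a matrix with unit-norm columns and coherence at most `μ`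
satisfies the RIP of order `k` with constant `(k-1)μ`. -/
theorem coherence_implies_RIP
    (m M k : ℕ) (Φ : Matrix (Fin m) (Fin M) ℝ) (μ : ℝ) (hμ : 0 ≤ μ)
    (hnorm : ∀ i : Fin M, ∑ x : Fin m, (Φ x i) ^ 2 = 1)
    (hcoh : ∀ i j : Fin M, i ≠ j → |∑ x : Fin m, Φ x i * Φ x j| ≤ μ)
    (v : Fin M → ℝ)
    (hv : (Finset.univ.filter (fun i => v i ≠ 0)).card ≤ k) :
    (1 - ((k : ℝ) - 1) * μ) * ∑ i : Fin M, (v i) ^ 2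
        ≤ ∑ x : Fin m, (Φ.mulVec v x) ^ 2 ∧
    ∑ x : Fin m, (Φ.mulVec v x) ^ 2
        ≤ (1 + ((k : ℝ) - 1) * μ) * ∑ i : Fin M, (v i) ^ 2 := by
  classical
  set S : Finset (Fin M) := Finset.univ.filter (fun i => v i ≠ 0) with hS
  set Q : ℝ := ∑ i : Fin M, (v i) ^ 2 with hQ
  set g : Fin M → Fin M → ℝ := fun i j => ∑ x : Fin m, Φ x i * Φ x j with hg
  -- expand the quadratic form
  have hE : ∑ x : Fin m, (Φ.mulVec v x) ^ 2
      = ∑ i : Fin M, ∑ j : Fin M, v i * v j * g i j := by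
    have : ∀ x : Fin m, (Φ.mulVec v x) ^ 2
        = ∑ i : Fin M, ∑ j : Fin M, (Φ x i * v i) * (Φ x j * v j) := by
      intro x
      simp [Matrix.mulVec, dotProduct, sq, Finset.sum_mul_sum]
    rw [Finset.sum_congr rfl (fun x _ => this x), Finset.sum_comm]
    refine Finset.sum_congr rfl (fun i _ => ?_)
    rw [Finset.sum_comm]
    refine Finset.sum_congr rfl (fun j _ => ?_)
    rw [hg, Finset.mul_sum]
    exact Finset.sum_congr rfl (fun x _ => by ring)
  -- split diagonal and off-diagonal
  have hsplit : ∑ i : Fin M, ∑ j : Fin M, v i * v j * g i j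
      = Q + ∑ i : Fin M, ∑ j ∈ Finset.univ.erase i, v i * v j * g i j := by
    have h1 : ∀ i : Fin M, ∑ j : Fin M, v i * v j * g i j
        = v i ^ 2 + ∑ j ∈ Finset.univ.erase i, v i * v j * g i j := by
      intro i
      rw [← Finset.add_sum_erase _ _ (Finset.mem_univ i)]
      have : g i i = 1 := by
        rw [hg]; simpa [sq] using hnorm i
      rw [this]; ring_nf
    rw [Finset.sum_congr rfl (fun i _ => h1 i), Finset.sum_add_distrib, hQ]
  set R : ℝ := ∑ i : Fin M, ∑ j ∈ Finset.univ.erase i, v i * v j * g i j with hR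
  -- bound |v| sums
  have habs : (∑ i : Fin M, |v i|) ^ 2 ≤ (k : ℝ) * Q := by
    have h0 : ∑ i : Fin M, |v i| = ∑ i ∈ S, |v i| := by
      symm
      apply Finset.sum_subset (Finset.subset_univ S)
      intro i _ hi
      simp [hS] at hi
      simp [hi]
    have h1 : (∑ i ∈ S, |v i|) ^ 2 ≤ (S.card : ℝ) * ∑ i ∈ S, |v i| ^ 2 :=
      sq_sum_le_card_mul_sum_sq
    have h2 : ∑ i ∈ S, |v i| ^ 2 ≤ Q := by
      rw [hQ]
      refine Finset.sum_le_sum_of_subset_of_nonneg (Finset.subset_univ S) ?_ |>.trans_eq ?_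
      · intro i _ _; positivity
      · exact Finset.sum_congr rfl (fun i _ => by rw [sq_abs])
    have h3 : (S.card : ℝ) ≤ (k : ℝ) := by exact_mod_cast hv
    have hQ0 : 0 ≤ Q := by rw [hQ]; positivity
    calc (∑ i : Fin M, |v i|) ^ 2 = (∑ i ∈ S, |v i|) ^ 2 := by rw [h0]
      _ ≤ (S.card : ℝ) * ∑ i ∈ S, |v i| ^ 2 := h1
      _ ≤ (k : ℝ) * Q := by
          apply mul_le_mul h3 h2 (by positivity) (by positivity)
  -- bound the off-diagonal term
  have hRbound : |R| ≤ ((k : ℝ) - 1) * μ * Q := by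
    have hterm : ∀ i : Fin M, |∑ j ∈ Finset.univ.erase i, v i * v j * g i j|
        ≤ ∑ j ∈ Finset.univ.erase i, |v i| * |v j| * μ := by
      intro i
      refine (Finset.abs_sum_le_sum_abs _ _).trans (Finset.sum_le_sum fun j hj => ?_)
      rw [abs_mul, abs_mul]
      have := hcoh i j (fun h => (Finset.mem_erase.mp hj).1 h.symm)
      exact mul_le_mul_of_nonneg_left this (by positivity)
    have h1 : |R| ≤ ∑ i : Fin M, ∑ j ∈ Finset.univ.erase i, |v i| * |v j| * μ :=
      (Finset.abs_sum_le_sum_abs _ _).trans (Finset.sum_le_sum fun i _ => hterm i)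
    have h2 : ∑ i : Fin M, ∑ j ∈ Finset.univ.erase i, |v i| * |v j| * μ
        = μ * ((∑ i : Fin M, |v i|) ^ 2 - Q) := by
      have h3 : ∀ i : Fin M, ∑ j ∈ Finset.univ.erase i, |v i| * |v j| * μ
          = μ * (|v i| * ((∑ j : Fin M, |v j|) - |v i|)) := by
        intro i
        have he : ∑ j ∈ Finset.univ.erase i, |v j|
            = (∑ j : Fin M, |v j|) - |v i| :=
          Finset.sum_erase_eq_sub (Finset.mem_univ i)
        calc ∑ j ∈ Finset.univ.erase i, |v i| * |v j| * μ
            = ∑ j ∈ Finset.univ.erase i, μ * |v i| * |v j| :=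
              Finset.sum_congr rfl (fun j _ => by ring)
          _ = μ * |v i| * ∑ j ∈ Finset.univ.erase i, |v j| :=
              (Finset.mul_sum _ _ _).symm
          _ = μ * (|v i| * ((∑ j : Fin M, |v j|) - |v i|)) := by rw [he]; ring
      rw [Finset.sum_congr rfl (fun i _ => h3 i), ← Finset.mul_sum]
      congr 1
      have h5 : ∀ i : Fin M, |v i| * ((∑ j : Fin M, |v j|) - |v i|)
          = |v i| * (∑ j : Fin M, |v j|) - v i ^ 2 := by
        intro i
        rw [mul_sub, ← abs_mul, abs_mul_self, ← sq]
      rw [Finset.sum_congr rfl (fun i _ => h5 i), Finset.sum_sub_distrib,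
        ← Finset.sum_mul, ← sq, hQ]
    have h4 : μ * ((∑ i : Fin M, |v i|) ^ 2 - Q) ≤ μ * ((k : ℝ) * Q - Q) := by
      apply mul_le_mul_of_nonneg_left _ hμ
      linarith [habs]
    calc |R| ≤ μ * ((∑ i : Fin M, |v i|) ^ 2 - Q) := h1.trans_eq h2
      _ ≤ μ * ((k : ℝ) * Q - Q) := h4
      _ = ((k : ℝ) - 1) * μ * Q := by ring
  have hEQ : ∑ x : Fin m, (Φ.mulVec v x) ^ 2 = Q + R := by rw [hE, hsplit]
  rw [hEQ]
  rcases abs_le.mp hRbound with ⟨hlo, hhi⟩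
  constructor <;> nlinarith [hlo, hhi]
end

section
/- Let k, n, n', M, M', r, r' be positive integers with r ≤ r'. Let S : Fin M → Fin k → Fin n satisfy: for all i ≠ i', the cardinality of {l : Fin k | S i l = S i' l} is at most r. Let S' : Fin M' → Fin k → Fin n' satisfy: for all j ≠ j', the cardinality of {l : Fin k | S' j l = S' j' l} is at most r'. Define the composed pattern T : (Fin M × Fin M') → Fin k → ℕ by T (i,j) l = n' * (S i l) + (S' j l) (coercions to ℕ). Then for any two distinct pairs (i,j) ≠ (i',j'), the cardinality of {l : Fin k | T (i,j) l = T (i',j') l} is at most r'. -/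
lemma base_expand_inj {n' a a' b b' : ℕ} (hn' : 0 < n')
    (hb : b < n') (hb' : b' < n') (h : n' * a + b = n' * a' + b') :
    a = a' ∧ b = b' := by
  have h1 : (n' * a + b) / n' = a := by
    rw [Nat.mul_add_div hn', Nat.div_eq_of_lt hb]; omega
  have h2 : (n' * a' + b') / n' = a' := by
    rw [Nat.mul_add_div hn', Nat.div_eq_of_lt hb']; omega
  have ha : a = a' := by rw [← h1, ← h2, h]
  subst ha
  omega

/-- Combinatorial core of Lemma 3.1: the composed support pattern
`T (i,j) l = n' * S i l + S' j l` has pairwise column overlap at most `r'`. -/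
theorem composed_pattern_overlap
    (k n n' M M' r r' : ℕ)
    (hk : 0 < k) (hn : 0 < n) (hn' : 0 < n') (hM : 0 < M) (hM' : 0 < M')
    (hr : 0 < r) (hr' : 0 < r') (hrr' : r ≤ r')
    (S : Fin M → Fin k → Fin n)
    (hS : ∀ i i' : Fin M, i ≠ i' →
      (Finset.univ.filter (fun l : Fin k => S i l = S i' l)).card ≤ r)
    (S' : Fin M' → Fin k → Fin n')
    (hS' : ∀ j j' : Fin M', j ≠ j' →
      (Finset.univ.filter (fun l : Fin k => S' j l = S' j' l)).card ≤ r')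
    (T : Fin M × Fin M' → Fin k → ℕ)
    (hT : ∀ p : Fin M × Fin M', ∀ l : Fin k,
      T p l = n' * (S p.1 l : ℕ) + (S' p.2 l : ℕ)) :
    ∀ p q : Fin M × Fin M', p ≠ q →
      (Finset.univ.filter (fun l : Fin k => T p l = T q l)).card ≤ r' := by
  intro p q hpq
  have key : ∀ l : Fin k, T p l = T q l →
      (S p.1 l = S q.1 l ∧ S' p.2 l = S' q.2 l) := by
    intro l h
    rw [hT, hT] at h
    obtain ⟨h1, h2⟩ := base_expand_inj hn' (S' p.2 l).isLt (S' q.2 l).isLt h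
    exact ⟨Fin.ext h1, Fin.ext h2⟩
  rcases eq_or_ne p.1 q.1 with h1 | h1
  · have h2 : p.2 ≠ q.2 := fun h2 => hpq (Prod.ext h1 h2)
    calc (Finset.univ.filter (fun l : Fin k => T p l = T q l)).card
        ≤ (Finset.univ.filter (fun l : Fin k => S' p.2 l = S' q.2 l)).card := by
          apply Finset.card_le_card
          intro l hl
          simp only [Finset.mem_filter, Finset.mem_univ, true_and] at *
          exact (key l hl).2
      _ ≤ r' := hS' _ _ h2
  · calc (Finset.univ.filter (fun l : Fin k => T p l = T q l)).card
        ≤ (Finset.univ.filter (fun l : Fin k => S p.1 l = S q.1 l)).card := by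
          apply Finset.card_le_card
          intro l hl
          simp only [Finset.mem_filter, Finset.mem_univ, true_and] at *
          exact (key l hl).1
      _ ≤ r := hS _ _ h1
      _ ≤ r' := hrr'
end

section
/- Let k, n, n', M, M', r, r' be positive integers with r ≤ r'. Let S : Fin M → Fin k → Fin n have pairwise column overlap at most r and S' : Fin M' → Fin k → Fin n' have pairwise column overlap at most r'. Define the composed binary matrix Φ : Matrix (Fin k × Fin (n*n')) (Fin M × Fin M') ℝ by Φ (l,x) (i,j) = 1 if (x : ℕ) = n' * (S i l) + (S' j l) and 0 otherwise. Then every column of Φ has squared Euclidean norm equal to k, and for any two distinct columns u ≠ v of Φ, |⟨Φ_u, Φ_v⟩| ≤ r'; consequently the coherence of Φ (the maximum over distinct pairs of |⟨Φ_u, Φ_v⟩| / (‖Φ_u‖₂‖Φ_v‖₂)) is at most r'/k. -/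
lemma sum_ind_one (N c : ℕ) (hc : c < N) :
    ∑ x : Fin N, (if (x : ℕ) = c then (1:ℝ) else 0) = 1 := by
  have h : ∀ x : Fin N, ((x : ℕ) = c) ↔ (x = ⟨c, hc⟩) := fun x => by
    simp [Fin.ext_iff]
  simp_rw [h]
  simp

/-- Lemma 3.1: the composed binary matrix has columns of squared norm `k`,
pairwise column inner products at most `r'` in absolute value, and hence
coherence at most `r'/k`. -/
theorem composed_matrix_coherence
    (k n n' M M' r r' : ℕ)
    (hk : 0 < k) (hn : 0 < n) (hn' : 0 < n') (hM : 0 < M) (hM' : 0 < M')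
    (hr : 0 < r) (hr' : 0 < r') (hrr' : r ≤ r')
    (S : Fin M → Fin k → Fin n)
    (hS : ∀ i i' : Fin M, i ≠ i' →
      (Finset.univ.filter (fun l : Fin k => S i l = S i' l)).card ≤ r)
    (S' : Fin M' → Fin k → Fin n')
    (hS' : ∀ j j' : Fin M', j ≠ j' →
      (Finset.univ.filter (fun l : Fin k => S' j l = S' j' l)).card ≤ r')
    (Φ : Matrix (Fin k × Fin (n * n')) (Fin M × Fin M') ℝ)
    (hΦ : ∀ p : Fin k × Fin (n * n'), ∀ q : Fin M × Fin M',
      Φ p q = if (p.2 : ℕ) = n' * (S q.1 p.1 : ℕ) + (S' q.2 p.1 : ℕ) then 1 else 0) :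
    (∀ u : Fin M × Fin M',
        ∑ p : Fin k × Fin (n * n'), (Φ p u) ^ 2 = (k : ℝ)) ∧
    (∀ u v : Fin M × Fin M', u ≠ v →
        |∑ p : Fin k × Fin (n * n'), Φ p u * Φ p v| ≤ (r' : ℝ)) ∧
    (∀ u v : Fin M × Fin M', u ≠ v →
        |∑ p : Fin k × Fin (n * n'), Φ p u * Φ p v| /
          (Real.sqrt (∑ p : Fin k × Fin (n * n'), (Φ p u) ^ 2) *
           Real.sqrt (∑ p : Fin k × Fin (n * n'), (Φ p v) ^ 2))
          ≤ (r' : ℝ) / (k : ℝ)) := by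
  have hlt : ∀ (a : Fin n) (b : Fin n'), n' * (a : ℕ) + (b : ℕ) < n * n' := by
    intro a b
    calc n' * (a : ℕ) + (b : ℕ) < n' * (a : ℕ) + n' := by omega
      _ = n' * ((a : ℕ) + 1) := by ring
      _ ≤ n' * n := Nat.mul_le_mul_left _ a.2
      _ = n * n' := Nat.mul_comm _ _
  -- squared norms
  have h1 : ∀ u : Fin M × Fin M',
      ∑ p : Fin k × Fin (n * n'), (Φ p u) ^ 2 = (k : ℝ) := by
    intro u
    rw [Fintype.sum_prod_type]
    have : ∀ l : Fin k, ∑ x : Fin (n * n'), (Φ (l, x) u) ^ 2 = 1 := by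
      intro l
      simp only [hΦ]
      have : ∀ x : Fin (n * n'),
          ((if (x : ℕ) = n' * (S u.1 l : ℕ) + (S' u.2 l : ℕ) then (1:ℝ) else 0)) ^ 2
          = (if (x : ℕ) = n' * (S u.1 l : ℕ) + (S' u.2 l : ℕ) then (1:ℝ) else 0) := by
        intro x; split <;> norm_num
      simp_rw [this]
      exact sum_ind_one _ _ (hlt _ _)
    simp [this]
  -- inner products
  have h2 : ∀ u v : Fin M × Fin M', u ≠ v →
      |∑ p : Fin k × Fin (n * n'), Φ p u * Φ p v| ≤ (r' : ℝ) := by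
    intro u v huv
    have hsum : ∑ p : Fin k × Fin (n * n'), Φ p u * Φ p v
        = ((Finset.univ.filter
            (fun l : Fin k => S u.1 l = S v.1 l ∧ S' u.2 l = S' v.2 l)).card : ℝ) := by
      rw [Fintype.sum_prod_type]
      have hl : ∀ l : Fin k, ∑ x : Fin (n * n'), Φ (l, x) u * Φ (l, x) v
          = if S u.1 l = S v.1 l ∧ S' u.2 l = S' v.2 l then (1:ℝ) else 0 := by
        intro l
        simp only [hΦ]
        by_cases hc : S u.1 l = S v.1 l ∧ S' u.2 l = S' v.2 l
        · rw [if_pos hc]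
          have : ∀ x : Fin (n * n'),
              (if (x : ℕ) = n' * (S u.1 l : ℕ) + (S' u.2 l : ℕ) then (1:ℝ) else 0) *
              (if (x : ℕ) = n' * (S v.1 l : ℕ) + (S' v.2 l : ℕ) then (1:ℝ) else 0)
              = (if (x : ℕ) = n' * (S u.1 l : ℕ) + (S' u.2 l : ℕ) then (1:ℝ) else 0) := by
            intro x
            rw [hc.1, hc.2]
            split <;> norm_num
          simp_rw [this]
          exact sum_ind_one _ _ (hlt _ _)
        · rw [if_neg hc]
          have hne : n' * (S u.1 l : ℕ) + (S' u.2 l : ℕ)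
              ≠ n' * (S v.1 l : ℕ) + (S' v.2 l : ℕ) := by
            intro heq
            have hb := (S' u.2 l).2
            have hb' := (S' v.2 l).2
            have h1' : (S' u.2 l : ℕ) = (S' v.2 l : ℕ) := by
              rcases Nat.lt_trichotomy (S u.1 l : ℕ) (S v.1 l : ℕ) with h | h | h
              · exfalso
                have : n' * ((S u.1 l : ℕ) + 1) ≤ n' * (S v.1 l : ℕ) :=
                  Nat.mul_le_mul_left _ h
                nlinarith [this]
              · rw [h] at heq; omega
              · exfalso
                have : n' * ((S v.1 l : ℕ) + 1) ≤ n' * (S u.1 l : ℕ) :=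
                  Nat.mul_le_mul_left _ h
                nlinarith [this]
            have h2' : (S u.1 l : ℕ) = (S v.1 l : ℕ) := by
              have := Nat.pos_of_ne_zero (fun h0 => by omega : n' ≠ 0)
              have := (Nat.mul_left_cancel hn' (by omega : n' * (S u.1 l : ℕ) = n' * (S v.1 l : ℕ)))
              exact this
            exact hc ⟨Fin.ext h2', Fin.ext h1'⟩
          apply Finset.sum_eq_zero
          intro x _
          split <;> split <;> simp_all
      simp_rw [hl]
      rw [Finset.sum_ite, Finset.sum_const, Finset.sum_const]
      simp
    rw [hsum]
    rw [abs_of_nonneg (by positivity)]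
    have hcard : (Finset.univ.filter
        (fun l : Fin k => S u.1 l = S v.1 l ∧ S' u.2 l = S' v.2 l)).card ≤ r' := by
      by_cases hj : u.2 = v.2
      · have hi : u.1 ≠ v.1 := by
          intro hi; exact huv (Prod.ext hi hj)
        calc _ ≤ (Finset.univ.filter (fun l : Fin k => S u.1 l = S v.1 l)).card := by
              apply Finset.card_le_card
              intro l hl
              simp only [Finset.mem_filter] at *
              exact ⟨hl.1, hl.2.1⟩
          _ ≤ r := hS _ _ hi
          _ ≤ r' := hrr'
      · calc _ ≤ (Finset.univ.filter (fun l : Fin k => S' u.2 l = S' v.2 l)).card := by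
              apply Finset.card_le_card
              intro l hl
              simp only [Finset.mem_filter] at *
              exact ⟨hl.1, hl.2.2⟩
          _ ≤ r' := hS' _ _ hj
    exact_mod_cast hcard
  refine ⟨h1, h2, ?_⟩
  intro u v huv
  rw [h1 u, h1 v, Real.mul_self_sqrt (by positivity : (0:ℝ) ≤ (k:ℝ))]
  have hb := h2 u v huv
  have hk0 : (0:ℝ) < (k:ℝ) := by exact_mod_cast hk
  gcongr
end

section
/- Let k, n, n', M, M', r, r', s be positive integers with r ≤ r' and (s−1)·r' < k. Let S : Fin M → Fin k → Fin n have pairwise column overlap at most r and S' : Fin M' → Fin k → Fin n' have pairwise column overlap at most r'. Let Φ : Matrix (Fin k × Fin (n*n')) (Fin M × Fin M') ℝ be the composed binary matrix, Φ (l,x) (i,j) = 1 if (x : ℕ) = n' * (S i l) + (S' j l) and 0 otherwise. Then the column-normalized matrix (1/√k)·Φ satisfies the Restricted Isometry Property of order s with constant δ_s = (s−1)·r'/k: for every vector v : (Fin M × Fin M') → ℝ with at most s nonzero entries, (1 − (s−1)·r'/k)·k·‖v‖₂² ≤ ‖Φ·v‖₂² ≤ (1 + (s−1)·r'/k)·k·‖v‖₂².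 -/
/-- Theorem 3.2: the (column-normalized) composed binary matrix satisfies the
RIP of order `s` with constant `(s-1) * r' / k`, whenever `(s-1) * r' < k`. -/
theorem composed_matrix_RIP
    (k n n' M M' r r' s : ℕ)
    (hk : 0 < k) (hn : 0 < n) (hn' : 0 < n') (hM : 0 < M) (hM' : 0 < M')
    (hr : 0 < r) (hr' : 0 < r') (hs : 0 < s) (hrr' : r ≤ r')
    (hsk : (s - 1) * r' < k)
    (S : Fin M → Fin k → Fin n)
    (hS : ∀ i i' : Fin M, i ≠ i' →
      (Finset.univ.filter (fun l : Fin k => S i l = S i' l)).card ≤ r)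
    (S' : Fin M' → Fin k → Fin n')
    (hS' : ∀ j j' : Fin M', j ≠ j' →
      (Finset.univ.filter (fun l : Fin k => S' j l = S' j' l)).card ≤ r')
    (Φ : Matrix (Fin k × Fin (n * n')) (Fin M × Fin M') ℝ)
    (hΦ : ∀ p : Fin k × Fin (n * n'), ∀ q : Fin M × Fin M',
      Φ p q = if (p.2 : ℕ) = n' * (S q.1 p.1 : ℕ) + (S' q.2 p.1 : ℕ) then 1 else 0)
    (v : Fin M × Fin M' → ℝ)
    (hv : (Finset.univ.filter (fun q : Fin M × Fin M' => v q ≠ 0)).card ≤ s) :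
    (1 - ((s : ℝ) - 1) * (r' : ℝ) / (k : ℝ)) * (k : ℝ) *
        ∑ q : Fin M × Fin M', (v q) ^ 2
      ≤ ∑ p : Fin k × Fin (n * n'), (Φ.mulVec v p) ^ 2 ∧
    ∑ p : Fin k × Fin (n * n'), (Φ.mulVec v p) ^ 2
      ≤ (1 + ((s : ℝ) - 1) * (r' : ℝ) / (k : ℝ)) * (k : ℝ) *
        ∑ q : Fin M × Fin M', (v q) ^ 2 := by
  classical
  set G : (Fin M × Fin M') → (Fin M × Fin M') → ℝ :=
    fun q q' => ∑ p : Fin k × Fin (n * n'), Φ p q * Φ p q' with hGdef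
  -- bound on addresses
  have haddr : ∀ (l : Fin k) (q : Fin M × Fin M'),
      n' * (S q.1 l : ℕ) + (S' q.2 l : ℕ) < n * n' := by
    intro l q
    calc n' * (S q.1 l : ℕ) + (S' q.2 l : ℕ)
        < n' * (S q.1 l : ℕ) + n' := by
          exact Nat.add_lt_add_left (S' q.2 l).isLt _
      _ = n' * ((S q.1 l : ℕ) + 1) := by ring
      _ ≤ n' * n := Nat.mul_le_mul_left _ (Nat.succ_le_of_lt (S q.1 l).isLt)
      _ = n * n' := Nat.mul_comm _ _
  -- inner product over one block
  have inner_l : ∀ (l : Fin k) (q q' : Fin M × Fin M'),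
      (∑ x : Fin (n * n'), Φ (l, x) q * Φ (l, x) q')
      = if S q.1 l = S q'.1 l ∧ S' q.2 l = S' q'.2 l then (1 : ℝ) else 0 := by
    intro l q q'
    set A : Fin (n * n') := ⟨n' * (S q.1 l : ℕ) + (S' q.2 l : ℕ), haddr l q⟩ with hA
    set A' : Fin (n * n') := ⟨n' * (S q'.1 l : ℕ) + (S' q'.2 l : ℕ), haddr l q'⟩ with hA'
    have h1 : ∀ x : Fin (n * n'), Φ (l, x) q = if x = A then (1:ℝ) else 0 := by
      intro x
      rw [hΦ]
      simp only [Fin.ext_iff, hA]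
    have h2 : ∀ x : Fin (n * n'), Φ (l, x) q' = if x = A' then (1:ℝ) else 0 := by
      intro x
      rw [hΦ]
      simp only [Fin.ext_iff, hA']
    have key : (∑ x : Fin (n * n'), Φ (l, x) q * Φ (l, x) q')
        = if A = A' then (1:ℝ) else 0 := by
      simp_rw [h1, h2, ite_mul, one_mul, zero_mul]
      simp [Finset.sum_ite_eq]
    rw [key]
    congr 1
    have hAA : (A = A') ↔ (S q.1 l = S q'.1 l ∧ S' q.2 l = S' q'.2 l) := by
      constructor
      · intro h
        have hval : n' * (S q.1 l : ℕ) + (S' q.2 l : ℕ)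
            = n' * (S q'.1 l : ℕ) + (S' q'.2 l : ℕ) := by
          simpa [hA, hA', Fin.ext_iff] using h
        have hd1 : (n' * (S q.1 l : ℕ) + (S' q.2 l : ℕ)) / n' = (S q.1 l : ℕ) := by
          rw [Nat.mul_add_div hn', Nat.div_eq_of_lt (S' q.2 l).isLt, Nat.add_zero]
        have hd2 : (n' * (S q'.1 l : ℕ) + (S' q'.2 l : ℕ)) / n' = (S q'.1 l : ℕ) := by
          rw [Nat.mul_add_div hn', Nat.div_eq_of_lt (S' q'.2 l).isLt, Nat.add_zero]
        have hm1 : (n' * (S q.1 l : ℕ) + (S' q.2 l : ℕ)) % n' = (S' q.2 l : ℕ) := by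
          rw [Nat.mul_add_mod, Nat.mod_eq_of_lt (S' q.2 l).isLt]
        have hm2 : (n' * (S q'.1 l : ℕ) + (S' q'.2 l : ℕ)) % n' = (S' q'.2 l : ℕ) := by
          rw [Nat.mul_add_mod, Nat.mod_eq_of_lt (S' q'.2 l).isLt]
        constructor
        · apply Fin.ext; rw [← hd1, ← hd2, hval]
        · apply Fin.ext; rw [← hm1, ← hm2, hval]
      · rintro ⟨h1', h2'⟩
        apply Fin.ext
        simp [hA, hA', h1', h2']
    simp [hAA]
  -- the Gram matrix entries
  have hGcard : ∀ q q' : Fin M × Fin M',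
      G q q' = ((Finset.univ.filter
        (fun l : Fin k => S q.1 l = S q'.1 l ∧ S' q.2 l = S' q'.2 l)).card : ℝ) := by
    intro q q'
    show (∑ p : Fin k × Fin (n * n'), Φ p q * Φ p q') = _
    rw [Fintype.sum_prod_type]
    simp_rw [inner_l]
    rw [Finset.sum_boole]
  have hGdiag : ∀ q : Fin M × Fin M', G q q = (k : ℝ) := by
    intro q
    rw [hGcard]
    simp
  have hGnonneg : ∀ q q' : Fin M × Fin M', 0 ≤ G q q' := by
    intro q q'; rw [hGcard]; positivity
  have hGoff : ∀ q q' : Fin M × Fin M', q ≠ q' → G q q' ≤ (r' : ℝ) := by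
    intro q q' hqq
    rw [hGcard]
    by_cases h2 : q.2 = q'.2
    · have h1 : q.1 ≠ q'.1 := by
        intro h1; exact hqq (Prod.ext h1 h2)
      have hsub : (Finset.univ.filter
          (fun l : Fin k => S q.1 l = S q'.1 l ∧ S' q.2 l = S' q'.2 l))
          ⊆ (Finset.univ.filter (fun l : Fin k => S q.1 l = S q'.1 l)) := by
        intro l hl
        simp only [Finset.mem_filter] at hl ⊢
        exact ⟨hl.1, hl.2.1⟩
      have := le_trans (Finset.card_le_card hsub) (le_trans (hS q.1 q'.1 h1) hrr')
      exact_mod_cast this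
    · have hsub : (Finset.univ.filter
          (fun l : Fin k => S q.1 l = S q'.1 l ∧ S' q.2 l = S' q'.2 l))
          ⊆ (Finset.univ.filter (fun l : Fin k => S' q.2 l = S' q'.2 l)) := by
        intro l hl
        simp only [Finset.mem_filter] at hl ⊢
        exact ⟨hl.1, hl.2.2⟩
      have := le_trans (Finset.card_le_card hsub) (hS' q.2 q'.2 h2)
      exact_mod_cast this
  -- expand the quadratic form
  have hexpand : ∑ p : Fin k × Fin (n * n'), (Φ.mulVec v p) ^ 2
      = ∑ q : Fin M × Fin M', ∑ q' : Fin M × Fin M', v q * v q' * G q q' := by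
    have e1 : ∀ p, (Φ.mulVec v p) ^ 2
        = ∑ q : Fin M × Fin M', ∑ q' : Fin M × Fin M',
            (v q * v q') * (Φ p q * Φ p q') := by
      intro p
      rw [Matrix.mulVec, dotProduct, sq, Finset.sum_mul_sum]
      refine Finset.sum_congr rfl fun q _ => Finset.sum_congr rfl fun q' _ => by ring
    simp_rw [e1, hGdef]
    rw [Finset.sum_comm]
    refine Finset.sum_congr rfl fun q _ => ?_
    rw [Finset.sum_comm]
    refine Finset.sum_congr rfl fun q' _ => ?_
    rw [← Finset.mul_sum]
  -- split diagonal and off-diagonal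
  set T : ℝ := ∑ q : Fin M × Fin M',
      ∑ q' ∈ Finset.univ.erase q, v q * v q' * G q q' with hTdef
  have hsplit : ∑ p : Fin k × Fin (n * n'), (Φ.mulVec v p) ^ 2
      = (k : ℝ) * ∑ q : Fin M × Fin M', (v q) ^ 2 + T := by
    rw [hexpand, hTdef]
    rw [Finset.mul_sum, ← Finset.sum_add_distrib]
    refine Finset.sum_congr rfl fun q _ => ?_
    rw [← Finset.add_sum_erase _ _ (Finset.mem_univ q), hGdiag]
    ring
  -- bound the off-diagonal part
  have habs : |T| ≤ ((s : ℝ) - 1) * (r' : ℝ) * ∑ q : Fin M × Fin M', (v q) ^ 2 := by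
    set E : ℝ := ∑ q : Fin M × Fin M', ∑ q' ∈ Finset.univ.erase q, |v q| * |v q'| with hEdef
    have hTE : |T| ≤ (r' : ℝ) * E := by
      rw [hEdef, Finset.mul_sum]
      refine le_trans (Finset.abs_sum_le_sum_abs _ _) (Finset.sum_le_sum fun q _ => ?_)
      rw [Finset.mul_sum]
      refine le_trans (Finset.abs_sum_le_sum_abs _ _) (Finset.sum_le_sum fun q' hq' => ?_)
      rw [abs_mul, abs_mul, abs_of_nonneg (hGnonneg q q')]
      have hne : q ≠ q' := (Finset.ne_of_mem_erase hq').symm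
      calc |v q| * |v q'| * G q q' ≤ |v q| * |v q'| * (r' : ℝ) := by
            apply mul_le_mul_of_nonneg_left (hGoff q q' hne) (by positivity)
        _ = (r' : ℝ) * (|v q| * |v q'|) := by ring
    have hE : E ≤ ((s : ℝ) - 1) * ∑ q : Fin M × Fin M', (v q) ^ 2 := by
      have hEeq : E = (∑ q : Fin M × Fin M', |v q|) ^ 2
          - ∑ q : Fin M × Fin M', (v q) ^ 2 := by
        rw [hEdef, sq, Finset.sum_mul_sum]
        rw [eq_sub_iff_add_eq, ← Finset.sum_add_distrib]
        refine Finset.sum_congr rfl fun q _ => ?_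
        rw [← Finset.add_sum_erase _ (fun q' => |v q| * |v q'|) (Finset.mem_univ q)]
        rw [← abs_mul, ← sq, abs_sq]
        ring
      have hCS : (∑ q : Fin M × Fin M', |v q|) ^ 2
          ≤ (s : ℝ) * ∑ q : Fin M × Fin M', (v q) ^ 2 := by
        set F := Finset.univ.filter (fun q : Fin M × Fin M' => v q ≠ 0) with hF
        have h1 : ∑ q : Fin M × Fin M', |v q| = ∑ q ∈ F, |v q| * 1 := by
          rw [Finset.sum_filter]
          refine Finset.sum_congr rfl fun q _ => ?_
          by_cases h : v q = 0 <;> simp [h]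
        have h2 : (∑ q ∈ F, |v q| * 1) ^ 2 ≤ (∑ q ∈ F, |v q| ^ 2) * ∑ q ∈ F, (1:ℝ) ^ 2 :=
          Finset.sum_mul_sq_le_sq_mul_sq F _ _
        have h3 : (∑ q ∈ F, (1:ℝ) ^ 2) ≤ (s : ℝ) := by
          simp only [one_pow, Finset.sum_const, nsmul_eq_mul, mul_one]
          exact_mod_cast hv
        have h4 : (∑ q ∈ F, |v q| ^ 2) ≤ ∑ q : Fin M × Fin M', (v q) ^ 2 := by
          simp_rw [sq_abs]
          exact Finset.sum_le_sum_of_subset_of_nonneg (Finset.filter_subset _ _)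
            (fun q _ _ => sq_nonneg _)
        calc (∑ q : Fin M × Fin M', |v q|) ^ 2
            = (∑ q ∈ F, |v q| * 1) ^ 2 := by rw [h1]
          _ ≤ (∑ q ∈ F, |v q| ^ 2) * ∑ q ∈ F, (1:ℝ) ^ 2 := h2
          _ ≤ (∑ q : Fin M × Fin M', (v q) ^ 2) * (s : ℝ) := by
              apply mul_le_mul h4 h3 (by positivity) (by positivity)
          _ = (s : ℝ) * ∑ q : Fin M × Fin M', (v q) ^ 2 := by ring
      have hvsum : 0 ≤ ∑ q : Fin M × Fin M', (v q) ^ 2 := by positivity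
      rw [hEeq]
      linarith [hCS]
    calc |T| ≤ (r' : ℝ) * E := hTE
      _ ≤ (r' : ℝ) * (((s : ℝ) - 1) * ∑ q : Fin M × Fin M', (v q) ^ 2) := by
          apply mul_le_mul_of_nonneg_left hE (by positivity)
      _ = ((s : ℝ) - 1) * (r' : ℝ) * ∑ q : Fin M × Fin M', (v q) ^ 2 := by ring
  -- finish
  have hkne : (k : ℝ) ≠ 0 := by positivity
  have hcancel : ((s : ℝ) - 1) * (r' : ℝ) / (k : ℝ) * (k : ℝ)
      = ((s : ℝ) - 1) * (r' : ℝ) := div_mul_cancel₀ _ hkne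
  have hT1 : -(((s : ℝ) - 1) * (r' : ℝ) * ∑ q : Fin M × Fin M', (v q) ^ 2) ≤ T :=
    neg_le_of_abs_le habs
  have hT2 : T ≤ ((s : ℝ) - 1) * (r' : ℝ) * ∑ q : Fin M × Fin M', (v q) ^ 2 :=
    le_of_abs_le habs
  have hrw : ∀ c w : ℝ, (c - ((s : ℝ) - 1) * (r' : ℝ) / (k : ℝ)) * (k : ℝ) * w
      = c * (k : ℝ) * w - ((s : ℝ) - 1) * (r' : ℝ) * w := by
    intro c w
    field_simp
  have hrw2 : ∀ c w : ℝ, (c + ((s : ℝ) - 1) * (r' : ℝ) / (k : ℝ)) * (k : ℝ) * w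
      = c * (k : ℝ) * w + ((s : ℝ) - 1) * (r' : ℝ) * w := by
    intro c w
    field_simp
  constructor
  · rw [hsplit, hrw]
    linarith [hT1]
  · rw [hsplit, hrw2]
    linarith [hT2]
end

section
/- Let m ≥ 2 be a natural number that is not prime, not the square of a prime, and not the product of two distinct primes. Then there exist natural numbers k ≥ 2, b ≥ 2 with m = k·b, a natural number M > m, and a support pattern S : Fin M → Fin k → Fin b such that for all i ≠ j in Fin M, the cardinality of {l : Fin k | S i l = S j l} is at most 1. Consequently, the binary matrix Φ : Matrix (Fin k × Fin b) (Fin M) ℝ defined by Φ (l,x) i = 1 if S i l = x and 0 otherwise has m rows, M > m columns, exactly k ones per column (one per row block), and any two distinct columns share at most one common nonzero position, so its coherence is at most 1/k. -/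
/-- Key algebraic lemma: two "lines" over `ZMod b` that agree at two distinct
slopes `l₁ ≠ l₂ < k` (with all `0 < d < k` coprime to `b`) must be equal. -/
lemma binaryCS_overlap_aux (k b : ℕ) (hb : 2 ≤ b)
    (hcop : ∀ d : ℕ, 0 < d → d < k → Nat.Coprime d b)
    (i j : Fin (b * b)) (l1 l2 : Fin k) (hl : l1 ≠ l2)
    (h1 : (i.val % b + l1.val * (i.val / b)) % b
        = (j.val % b + l1.val * (j.val / b)) % b)
    (h2 : (i.val % b + l2.val * (i.val / b)) % b
        = (j.val % b + l2.val * (j.val / b)) % b) :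
    i = j := by
  haveI : NeZero b := ⟨by omega⟩
  have hb0 : 0 < b := by omega
  set x1 := i.val % b with hx1
  set y1 := i.val / b with hy1
  set x2 := j.val % b with hx2
  set y2 := j.val / b with hy2
  have e1 : ((x1 + l1.val * y1 : ℕ) : ZMod b) = ((x2 + l1.val * y2 : ℕ) : ZMod b) :=
    (ZMod.natCast_eq_natCast_iff' _ _ _).mpr h1
  have e2 : ((x1 + l2.val * y1 : ℕ) : ZMod b) = ((x2 + l2.val * y2 : ℕ) : ZMod b) :=
    (ZMod.natCast_eq_natCast_iff' _ _ _).mpr h2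
  push_cast at e1 e2
  have hz : (((l1.val : ZMod b)) - (l2.val : ZMod b)) *
      ((y1 : ZMod b) - (y2 : ZMod b)) = 0 := by linear_combination e1 - e2
  have hlv : l1.val ≠ l2.val := fun h => hl (Fin.ext h)
  have hyc : (y1 : ZMod b) = (y2 : ZMod b) := by
    rcases Nat.lt_or_ge l1.val l2.val with h | h
    · have hd : Nat.Coprime (l2.val - l1.val) b :=
        hcop _ (by omega) (by have := l2.isLt; omega)
      have hu : IsUnit (((l2.val - l1.val : ℕ)) : ZMod b) :=
        (ZMod.isUnit_iff_coprime _ b).mpr hd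
      rw [Nat.cast_sub (le_of_lt h)] at hu
      have hz' : ((l2.val : ZMod b) - (l1.val : ZMod b)) *
          ((y1 : ZMod b) - (y2 : ZMod b)) = 0 := by linear_combination -hz
      have := (hu.mul_right_eq_zero).mp hz'
      exact sub_eq_zero.mp this
    · have h' : l2.val < l1.val := by omega
      have hd : Nat.Coprime (l1.val - l2.val) b :=
        hcop _ (by omega) (by have := l1.isLt; omega)
      have hu : IsUnit (((l1.val - l2.val : ℕ)) : ZMod b) :=
        (ZMod.isUnit_iff_coprime _ b).mpr hd
      rw [Nat.cast_sub (le_of_lt h')] at hu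
      have := (hu.mul_right_eq_zero).mp hz
      exact sub_eq_zero.mp this
  have hy1b : y1 < b := by
    rw [hy1]
    exact Nat.div_lt_of_lt_mul i.isLt
  have hy2b : y2 < b := by
    rw [hy2]
    exact Nat.div_lt_of_lt_mul j.isLt
  have hy : y1 = y2 := by
    have := ZMod.val_cast_of_lt hy1b
    have := ZMod.val_cast_of_lt hy2b
    rw [← ZMod.val_cast_of_lt hy1b, ← ZMod.val_cast_of_lt hy2b, hyc]
  have hxc : (x1 : ZMod b) = (x2 : ZMod b) := by
    rw [hy] at e1
    linear_combination e1
  have hx : x1 = x2 := by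
    rw [← ZMod.val_cast_of_lt (show x1 < b from Nat.mod_lt _ hb0),
        ← ZMod.val_cast_of_lt (show x2 < b from Nat.mod_lt _ hb0), hxc]
  rw [hx1, hx2] at hx
  rw [hy1, hy2] at hy
  have : (i : ℕ) = (j : ℕ) := by
    conv_lhs => rw [← Nat.mod_add_div i.val b]
    conv_rhs => rw [← Nat.mod_add_div j.val b]
    rw [hx, hy]
  exact Fin.ext this

/-- Theorem 4.1: for every `m ≥ 2` different from `p`, `p²` and `pq` (`p ≠ q`
primes), there is a deterministic binary CS matrix with `m` rows, more than `m`
columns, exactly one 1 per row block in each column, pairwise column overlap at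
most 1, and coherence at most `1/k`. -/
theorem exists_binary_CS_matrix_of_general_row_size
    (m : ℕ) (hm : 2 ≤ m)
    (hnp : ¬ m.Prime)
    (hnsq : ¬ ∃ p : ℕ, p.Prime ∧ m = p ^ 2)
    (hnpq : ¬ ∃ p q : ℕ, p.Prime ∧ q.Prime ∧ p ≠ q ∧ m = p * q) :
    ∃ k b : ℕ, 2 ≤ k ∧ 2 ≤ b ∧ m = k * b ∧
    ∃ M : ℕ, m < M ∧
    ∃ S : Fin M → Fin k → Fin b,
      (∀ i j : Fin M, i ≠ j →
        (Finset.univ.filter (fun l : Fin k => S i l = S j l)).card ≤ 1) ∧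
      ∃ Φ : Matrix (Fin k × Fin b) (Fin M) ℝ,
        (∀ p : Fin k × Fin b, ∀ i : Fin M,
          Φ p i = if S i p.1 = p.2 then 1 else 0) ∧
        (∀ i : Fin M, ∀ l : Fin k, ∃! x : Fin b, Φ (l, x) i ≠ 0) ∧
        (∀ i : Fin M,
          (Finset.univ.filter (fun p : Fin k × Fin b => Φ p i ≠ 0)).card = k) ∧
        (∀ i j : Fin M, i ≠ j →
          (Finset.univ.filter
            (fun p : Fin k × Fin b => Φ p i ≠ 0 ∧ Φ p j ≠ 0)).card ≤ 1) ∧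
        (∀ i j : Fin M, i ≠ j →
          |∑ p : Fin k × Fin b, Φ p i * Φ p j| /
            (Real.sqrt (∑ p : Fin k × Fin b, (Φ p i) ^ 2) *
             Real.sqrt (∑ p : Fin k × Fin b, (Φ p j) ^ 2)) ≤ 1 / (k : ℝ)) := by
  classical
  -- Set up k = least prime factor, b = m / k
  set K := m.minFac with hK_def
  have hKp : K.Prime := Nat.minFac_prime (by omega)
  obtain ⟨b, hmb⟩ : K ∣ m := Nat.minFac_dvd m
  have hb1 : b ≠ 1 := by
    rintro rfl
    rw [mul_one] at hmb
    exact hnp (hmb ▸ hKp)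
  have hb0 : b ≠ 0 := by rintro rfl; omega
  have hbnp : ¬ b.Prime := by
    intro hbp
    by_cases hbe : b = K
    · exact hnsq ⟨K, hKp, by rw [hmb, hbe]; ring⟩
    · exact hnpq ⟨K, b, hKp, hbp, Ne.symm hbe, hmb⟩
  have hb2 : 2 ≤ b := by omega
  have hbK : b.minFac.Prime := Nat.minFac_prime hb1
  have hKleb : K ≤ b.minFac :=
    Nat.minFac_le_of_dvd hbK.two_le ((Nat.minFac_dvd b).trans ⟨K, by rw [hmb]; ring⟩)
  have hKb : K < b := by
    have h2 : b.minFac ≠ b := fun h => hbnp (h ▸ hbK)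
    have h4 : b.minFac ≤ b := Nat.minFac_le (by omega)
    omega
  have hK2 : 2 ≤ K := hKp.two_le
  -- coprimality of small d with b
  have hcop : ∀ d : ℕ, 0 < d → d < K → Nat.Coprime d b := by
    intro d hd0 hdK
    by_contra h
    have hg1 : Nat.gcd d b ≠ 1 := h
    have hq : (Nat.gcd d b).minFac.Prime := Nat.minFac_prime hg1
    set q := (Nat.gcd d b).minFac with hq_def
    have hqd : q ∣ d := (Nat.minFac_dvd _).trans (Nat.gcd_dvd_left d b)
    have hqb : q ∣ b := (Nat.minFac_dvd _).trans (Nat.gcd_dvd_right d b)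
    have hle : q ≤ d := Nat.le_of_dvd hd0 hqd
    have hge : K ≤ q := Nat.minFac_le_of_dvd hq.two_le (hqb.trans ⟨K, by rw [hmb]; ring⟩)
    omega
  refine ⟨K, b, hK2, hb2, hmb, b * b, ?_, ?_⟩
  · calc m = K * b := hmb
      _ < b * b := (Nat.mul_lt_mul_right (by omega : 0 < b)).mpr hKb
  -- the support pattern
  set S : Fin (b * b) → Fin K → Fin b :=
    fun i l => ⟨(i.val % b + l.val * (i.val / b)) % b, Nat.mod_lt _ (by omega)⟩ with hS_def
  have hSval : ∀ (i : Fin (b * b)) (l : Fin K),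
      (S i l).val = (i.val % b + l.val * (i.val / b)) % b := fun i l => rfl
  have hover : ∀ i j : Fin (b * b), i ≠ j →
      (Finset.univ.filter (fun l : Fin K => S i l = S j l)).card ≤ 1 := by
    intro i j hij
    refine Finset.card_le_one.mpr ?_
    intro l1 hl1 l2 hl2
    by_contra hl
    refine hij (binaryCS_overlap_aux K b hb2 hcop i j l1 l2 hl ?_ ?_)
    · have := (Finset.mem_filter.mp hl1).2
      exact congrArg Fin.val this
    · have := (Finset.mem_filter.mp hl2).2
      exact congrArg Fin.val this
  refine ⟨S, hover, fun p i => if S i p.1 = p.2 then 1 else 0, fun p i => rfl, ?_, ?_, ?_, ?_⟩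
  · -- exactly one nonzero per block
    intro i l
    refine ⟨S i l, by simp, ?_⟩
    intro x hx
    rcases eq_or_ne (S i l) x with h | h
    · exact h.symm
    · simp [h] at hx
  · -- column support card = K
    intro i
    have himg : (Finset.univ.filter
        (fun p : Fin K × Fin b => (if S i p.1 = p.2 then (1:ℝ) else 0) ≠ 0))
        = Finset.univ.image (fun l => (l, S i l)) := by
      ext ⟨l, x⟩
      simp only [Finset.mem_filter, Finset.mem_univ, true_and, Finset.mem_image,
        ne_eq, ite_eq_right_iff, one_ne_zero, imp_false, not_not, Prod.mk.injEq]
      constructor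
      · intro h; exact ⟨l, rfl, h⟩
      · rintro ⟨l', rfl, rfl⟩; rfl
    rw [himg, Finset.card_image_of_injective _ (fun a c h => (Prod.mk.injEq _ _ _ _).mp h |>.1),
      Finset.card_univ, Fintype.card_fin]
  · -- pairwise support intersection ≤ 1
    intro i j hij
    refine le_trans (Finset.card_le_card_of_injOn Prod.fst ?_ ?_) (hover i j hij)
    · rintro ⟨l, x⟩ hp
      simp only [Finset.mem_coe, Finset.mem_filter, Finset.mem_univ, true_and, ne_eq,
        ite_eq_right_iff, one_ne_zero, imp_false, not_not] at hp
      simp only [Finset.mem_coe, Finset.mem_filter, Finset.mem_univ, true_and]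
      rw [hp.1, hp.2]
    · rintro ⟨l1, x1⟩ hp1 ⟨l2, x2⟩ hp2 h
      simp only [Finset.mem_coe, Finset.mem_filter, Finset.mem_univ, true_and, ne_eq,
        ite_eq_right_iff, one_ne_zero, imp_false, not_not] at hp1 hp2
      simp only at h
      subst h
      rw [Prod.mk.injEq]
      exact ⟨rfl, hp1.1 ▸ hp2.1 ▸ rfl⟩
  · -- coherence bound
    intro i j hij
    have hsq : ∀ t : Fin (b * b),
        (∑ p : Fin K × Fin b, (if S t p.1 = p.2 then (1:ℝ) else 0) ^ 2) = (K : ℝ) := by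
      intro t
      have : ∀ p : Fin K × Fin b,
          ((if S t p.1 = p.2 then (1:ℝ) else 0)) ^ 2
          = if S t p.1 = p.2 then (1:ℝ) else 0 := by
        intro p; split <;> norm_num
      rw [Finset.sum_congr rfl fun p _ => this p, Finset.sum_boole]
      have : (Finset.univ.filter (fun p : Fin K × Fin b => S t p.1 = p.2)).card = K := by
        have himg : (Finset.univ.filter (fun p : Fin K × Fin b => S t p.1 = p.2))
            = Finset.univ.image (fun l => (l, S t l)) := by
          ext ⟨l, x⟩
          simp only [Finset.mem_filter, Finset.mem_univ, true_and, Finset.mem_image,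
            Prod.mk.injEq]
          constructor
          · intro h; exact ⟨l, rfl, h⟩
          · rintro ⟨l', rfl, rfl⟩; rfl
        rw [himg, Finset.card_image_of_injective _
          (fun a c h => (Prod.mk.injEq _ _ _ _).mp h |>.1),
          Finset.card_univ, Fintype.card_fin]
      rw [this]
    have hcross : (∑ p : Fin K × Fin b,
        (if S i p.1 = p.2 then (1:ℝ) else 0) * (if S j p.1 = p.2 then (1:ℝ) else 0))
        = ((Finset.univ.filter
            (fun p : Fin K × Fin b => S i p.1 = p.2 ∧ S j p.1 = p.2)).card : ℝ) := by
      have : ∀ p : Fin K × Fin b,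
          (if S i p.1 = p.2 then (1:ℝ) else 0) * (if S j p.1 = p.2 then (1:ℝ) else 0)
          = if (S i p.1 = p.2 ∧ S j p.1 = p.2) then (1:ℝ) else 0 := by
        intro p
        by_cases h1 : S i p.1 = p.2 <;> by_cases h2 : S j p.1 = p.2 <;>
          simp [h1, h2]
      rw [Finset.sum_congr rfl fun p _ => this p, Finset.sum_boole]
    have hcard1 : (Finset.univ.filter
        (fun p : Fin K × Fin b => S i p.1 = p.2 ∧ S j p.1 = p.2)).card ≤ 1 := by
      refine le_trans (Finset.card_le_card_of_injOn Prod.fst ?_ ?_) (hover i j hij)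
      · rintro ⟨l, x⟩ hp
        simp only [Finset.mem_coe, Finset.mem_filter, Finset.mem_univ, true_and] at hp
        simp only [Finset.mem_coe, Finset.mem_filter, Finset.mem_univ, true_and]
        rw [hp.1, hp.2]
      · rintro ⟨l1, x1⟩ hp1 ⟨l2, x2⟩ hp2 h
        simp only [Finset.mem_coe, Finset.mem_filter, Finset.mem_univ, true_and] at hp1 hp2
        simp only at h
        subst h
        rw [Prod.mk.injEq]
        exact ⟨rfl, hp1.1 ▸ hp2.1 ▸ rfl⟩
    rw [hcross, hsq i, hsq j, Real.mul_self_sqrt (by positivity)]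
    have hKpos : (0:ℝ) < (K : ℝ) := by exact_mod_cast (by omega : 0 < K)
    rw [abs_of_nonneg (Nat.cast_nonneg _)]
    have h1 : ((Finset.univ.filter
        (fun p : Fin K × Fin b => S i p.1 = p.2 ∧ S j p.1 = p.2)).card : ℝ) ≤ 1 := by
      exact_mod_cast hcard1
    gcongr
end

section
/- Let m, M, k, r, r' be positive integers with r' ≤ r, and set h = k + r'. Suppose e : Fin M → (Fin k ↪ Fin m) assigns to each index an injective map (the ordered support of a column) such that for all i ≠ j, the cardinality of {(l, l') : Fin k × Fin k | e i l = e j l'} is at most r (pairwise support overlap at most r). Let H : Matrix (Fin h) (Fin h) ℝ be a Hadamard matrix: every entry of H is 1 or −1 and Hᵀ * H = h • (1 : Matrix (Fin h) (Fin h) ℝ). Define Φ : Matrix (Fin m) (Fin M × Fin h) ℝ by Φ x (i,t) = H l t if x = e i l for some (necessarily unique) l, and 0 otherwise. Then every column of Φ has squared Euclidean norm k, and for any two distinct column indices (i,t) ≠ (i',t'), |⟨Φ_(i,t), Φ_(i',t')⟩| ≤ r; hence the coherence of Φ is at most r/k. -/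
/-- Section 5.2: expanding each column of a binary sensing matrix (with `k` ones
per column and pairwise support overlap at most `r`) by rows of a Hadamard
matrix of size `h = k + r'` yields a ternary matrix whose columns have squared
norm `k`, whose pairwise column inner products are at most `r` in absolute
value, and whose coherence is hence at most `r/k`. -/
theorem hadamard_expansion_coherence
    (m M k r r' : ℕ)
    (hm : 0 < m) (hM : 0 < M) (hk : 0 < k) (hr : 0 < r) (hr' : 0 < r')
    (hr'r : r' ≤ r)
    (e : Fin M → (Fin k ↪ Fin m))
    (he : ∀ i j : Fin M, i ≠ j →
      (Finset.univ.filter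
        (fun p : Fin k × Fin k => e i p.1 = e j p.2)).card ≤ r)
    (H : Matrix (Fin (k + r')) (Fin (k + r')) ℝ)
    (hHentries : ∀ a b : Fin (k + r'), H a b = 1 ∨ H a b = -1)
    (hHorth : H.transpose * H
      = ((k + r' : ℕ) : ℝ) • (1 : Matrix (Fin (k + r')) (Fin (k + r')) ℝ))
    (Φ : Matrix (Fin m) (Fin M × Fin (k + r')) ℝ)
    (hΦ1 : ∀ (x : Fin m) (i : Fin M) (t : Fin (k + r')) (l : Fin k),
      e i l = x → Φ x (i, t) = H (Fin.castLE (Nat.le_add_right k r') l) t)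
    (hΦ0 : ∀ (x : Fin m) (i : Fin M) (t : Fin (k + r')),
      (∀ l : Fin k, e i l ≠ x) → Φ x (i, t) = 0) :
    (∀ q : Fin M × Fin (k + r'),
        ∑ x : Fin m, (Φ x q) ^ 2 = (k : ℝ)) ∧
    (∀ q q' : Fin M × Fin (k + r'), q ≠ q' →
        |∑ x : Fin m, Φ x q * Φ x q'| ≤ (r : ℝ)) ∧
    (∀ q q' : Fin M × Fin (k + r'), q ≠ q' →
        |∑ x : Fin m, Φ x q * Φ x q'| /
          (Real.sqrt (∑ x : Fin m, (Φ x q) ^ 2) *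
           Real.sqrt (∑ x : Fin m, (Φ x q') ^ 2)) ≤ (r : ℝ) / (k : ℝ)) := by
  classical
  set c : Fin k → Fin (k + r') := Fin.castLE (Nat.le_add_right k r') with hc
  have hcinj : Function.Injective c := Fin.castLE_injective _
  -- entries are bounded by 1 in absolute value
  have hΦentry : ∀ (x : Fin m) (q : Fin M × Fin (k + r')), |Φ x q| ≤ 1 := by
    rintro x ⟨i, t⟩
    by_cases hx : ∃ l, e i l = x
    · obtain ⟨l, hl⟩ := hx
      rw [hΦ1 x i t l hl]
      rcases hHentries (c l) t with h | h <;> rw [h] <;> norm_num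
    · push_neg at hx
      rw [hΦ0 x i t hx]; norm_num
  -- key: reduce sums over x to sums over the support
  have key : ∀ (i : Fin M) (t : Fin (k + r')) (g : Fin m → ℝ),
      ∑ x : Fin m, Φ x (i, t) * g x
        = ∑ l : Fin k, H (c l) t * g (e i l) := by
    intro i t g
    have himg : ∑ x ∈ Finset.univ.image (e i),
        Φ x (i, t) * g x = ∑ l : Fin k, Φ (e i l) (i, t) * g (e i l) :=
      Finset.sum_image (fun a _ b _ hab => (e i).injective hab)
    rw [← Finset.sum_subset (Finset.subset_univ (Finset.univ.image (e i)))
        (by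
          intro x _ hx
          have : ∀ l : Fin k, e i l ≠ x := by
            intro l hl
            exact hx (Finset.mem_image.2 ⟨l, Finset.mem_univ l, hl⟩)
          rw [hΦ0 x i t this, zero_mul])]
    rw [himg]
    refine Finset.sum_congr rfl fun l _ => ?_
    rw [hΦ1 (e i l) i t l rfl]
  -- squared norms are k
  have hnorm : ∀ q : Fin M × Fin (k + r'), ∑ x : Fin m, (Φ x q) ^ 2 = (k : ℝ) := by
    rintro ⟨i, t⟩
    have : ∑ x : Fin m, (Φ x (i, t)) ^ 2 = ∑ x : Fin m, Φ x (i, t) * Φ x (i, t) := by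
      simp [sq]
    rw [this, key i t (fun x => Φ x (i, t))]
    have : ∀ l : Fin k, H (c l) t * Φ (e i l) (i, t) = 1 := by
      intro l
      rw [hΦ1 (e i l) i t l rfl]
      rcases hHentries (c l) t with h | h <;> rw [h] <;> norm_num
    rw [Finset.sum_congr rfl fun l _ => this l]
    simp
  -- inner product bound
  have hip : ∀ q q' : Fin M × Fin (k + r'), q ≠ q' →
      |∑ x : Fin m, Φ x q * Φ x q'| ≤ (r : ℝ) := by
    rintro ⟨i, t⟩ ⟨i', t'⟩ hqq
    by_cases hii : i = i'
    · subst hii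
      have htt : t ≠ t' := fun h => hqq (by rw [h])
      rw [key i t (fun x => Φ x (i, t'))]
      have hval : ∀ l : Fin k, H (c l) t * Φ (e i l) (i, t') = H (c l) t * H (c l) t' := by
        intro l; rw [hΦ1 (e i l) i t' l rfl]
      rw [Finset.sum_congr rfl fun l _ => hval l]
      -- use Hadamard orthogonality
      have horth : ∑ a : Fin (k + r'), H a t * H a t' = 0 := by
        have := congrFun (congrFun hHorth t) t'
        simp [Matrix.mul_apply, Matrix.transpose_apply, Matrix.one_apply, htt] at this
        exact this
      set S : Finset (Fin (k + r')) := Finset.univ.image c with hS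
      have hsum_img : ∑ a ∈ S, H a t * H a t'
          = ∑ l : Fin k, H (c l) t * H (c l) t' := by
        rw [hS]; exact Finset.sum_image (fun a _ b _ hab => hcinj hab)
      have hsplit : ∑ a ∈ S, H a t * H a t' + ∑ a ∈ Sᶜ, H a t * H a t' = 0 := by
        rw [Finset.sum_add_sum_compl]; exact horth
      have hcardS : S.card = k := by
        rw [hS, Finset.card_image_of_injective _ hcinj, Finset.card_univ, Fintype.card_fin]
      have hcardSc : (Sᶜ : Finset (Fin (k + r'))).card = r' := by
        rw [Finset.card_compl, Fintype.card_fin, hcardS]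
        omega
      rw [← hsum_img]
      have : ∑ a ∈ S, H a t * H a t' = -∑ a ∈ Sᶜ, H a t * H a t' := by linarith
      rw [this, abs_neg]
      calc |∑ a ∈ Sᶜ, H a t * H a t'| ≤ ∑ a ∈ Sᶜ, |H a t * H a t'| :=
            Finset.abs_sum_le_sum_abs _ _
        _ ≤ ∑ _a ∈ Sᶜ, (1 : ℝ) := by
            refine Finset.sum_le_sum fun a _ => ?_
            rcases hHentries a t with h1 | h1 <;> rcases hHentries a t' with h2 | h2 <;>
              rw [h1, h2] <;> norm_num
        _ = (r' : ℝ) := by rw [Finset.sum_const, hcardSc]; simp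
        _ ≤ (r : ℝ) := by exact_mod_cast hr'r
    · -- different original columns
      set T : Finset (Fin m) :=
        Finset.univ.filter (fun x => (∃ l, e i l = x) ∧ ∃ l', e i' l' = x) with hT
      have hzero : ∀ x ∉ T, Φ x (i, t) * Φ x (i', t') = 0 := by
        intro x hx
        rw [hT, Finset.mem_filter] at hx
        push_neg at hx
        by_cases h1 : ∃ l, e i l = x
        · have h2 : ∀ l' : Fin k, e i' l' ≠ x := by
            have := hx (Finset.mem_univ x) h1
            exact this
          rw [hΦ0 x i' t' h2, mul_zero]
        · push_neg at h1
          rw [hΦ0 x i t h1, zero_mul]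
      have hTcard : T.card ≤ r := by
        set f : Fin m → Fin k × Fin k := fun x =>
          if h : (∃ l, e i l = x) ∧ ∃ l', e i' l' = x then
            (h.1.choose, h.2.choose) else (⟨0, hk⟩, ⟨0, hk⟩) with hf
        have hfx : ∀ x ∈ T, e i (f x).1 = x ∧ e i' (f x).2 = x := by
          intro x hx
          rw [hT, Finset.mem_filter] at hx
          rw [hf]
          simp only [hx.2, dif_pos]
          exact ⟨hx.2.1.choose_spec, hx.2.2.choose_spec⟩
        have : T.card ≤ (Finset.univ.filter
            (fun p : Fin k × Fin k => e i p.1 = e i' p.2)).card := by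
          apply Finset.card_le_card_of_injOn f
          · intro x hx
            rcases hfx x hx with ⟨h1, h2⟩
            exact Finset.mem_filter.2 ⟨Finset.mem_univ _, by rw [h1, h2]⟩
          · intro x hx y hy hxy
            rcases hfx x hx with ⟨h1, _⟩
            rcases hfx y hy with ⟨h1', _⟩
            rw [← h1, ← h1', hxy]
        exact this.trans (he i i' hii)
      calc |∑ x : Fin m, Φ x (i, t) * Φ x (i', t')|
          = |∑ x ∈ T, Φ x (i, t) * Φ x (i', t')| := by
            rw [Finset.sum_subset (Finset.subset_univ T) (fun x _ hx => hzero x hx)]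
        _ ≤ ∑ x ∈ T, |Φ x (i, t) * Φ x (i', t')| := Finset.abs_sum_le_sum_abs _ _
        _ ≤ ∑ _x ∈ T, (1 : ℝ) := by
            refine Finset.sum_le_sum fun x _ => ?_
            rw [abs_mul]
            exact mul_le_one₀ (hΦentry x (i, t)) (abs_nonneg _) (hΦentry x (i', t'))
        _ = (T.card : ℝ) := by simp
        _ ≤ (r : ℝ) := by exact_mod_cast hTcard
  refine ⟨hnorm, hip, ?_⟩
  intro q q' hqq
  have hss : Real.sqrt (k : ℝ) * Real.sqrt (k : ℝ) = (k : ℝ) :=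
    Real.mul_self_sqrt (by positivity)
  rw [hnorm q, hnorm q', hss]
  have hkpos : (0 : ℝ) < (k : ℝ) := by exact_mod_cast hk
  gcongr
  exact hip q q' hqq
end

section
/- Let p be a prime and r a natural number with r < p. Index columns by polynomials P over ZMod p of degree less than r+1 and rows by pairs (x, y) ∈ ZMod p × ZMod p, and define the DeVore matrix Φ by Φ (x,y) P = 1 if P.eval x = y and 0 otherwise. Then: (1) every column of Φ has exactly p nonzero entries (one in each row block {(x, ·) : y ∈ ZMod p}); (2) for any two distinct polynomials P ≠ Q of degree less than r+1, the supports of the corresponding columns intersect in at most r positions, i.e. the cardinality of {x : ZMod p | P.eval x = Q.eval x} is at most r; hence the coherence of Φ is at most r/p. -/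
/-- DeVore's construction: the binary matrix indexed by graphs of polynomials of
degree at most `r` over `ZMod p` has exactly `p` ones per column (one per row
block), pairwise column supports intersecting in at most `r` positions, and
coherence at most `r/p`. -/
theorem devore_matrix_coherence
    (p r : ℕ) [Fact p.Prime] (hrp : r < p)
    (Φ : Matrix (ZMod p × ZMod p)
      {P : Polynomial (ZMod p) // P.degree < ((r + 1 : ℕ) : WithBot ℕ)} ℝ)
    (hΦ : ∀ (xy : ZMod p × ZMod p)
        (P : {P : Polynomial (ZMod p) // P.degree < ((r + 1 : ℕ) : WithBot ℕ)}),
      Φ xy P = if (P : Polynomial (ZMod p)).eval xy.1 = xy.2 then 1 else 0) :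
    (∀ P : {P : Polynomial (ZMod p) // P.degree < ((r + 1 : ℕ) : WithBot ℕ)},
        ∀ x : ZMod p, ∃! y : ZMod p, Φ (x, y) P ≠ 0) ∧
    (∀ P : {P : Polynomial (ZMod p) // P.degree < ((r + 1 : ℕ) : WithBot ℕ)},
        (Finset.univ.filter (fun xy : ZMod p × ZMod p => Φ xy P ≠ 0)).card = p) ∧
    (∀ P Q : {P : Polynomial (ZMod p) // P.degree < ((r + 1 : ℕ) : WithBot ℕ)},
        P ≠ Q →
        (Finset.univ.filter
          (fun x : ZMod p =>
            (P : Polynomial (ZMod p)).eval x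
              = (Q : Polynomial (ZMod p)).eval x)).card ≤ r) ∧
    (∀ P Q : {P : Polynomial (ZMod p) // P.degree < ((r + 1 : ℕ) : WithBot ℕ)},
        P ≠ Q →
        |∑ xy : ZMod p × ZMod p, Φ xy P * Φ xy Q| /
          (Real.sqrt (∑ xy : ZMod p × ZMod p, (Φ xy P) ^ 2) *
           Real.sqrt (∑ xy : ZMod p × ZMod p, (Φ xy Q) ^ 2))
          ≤ (r : ℝ) / (p : ℝ)) := by
  have hppos : (0 : ℝ) < p := by exact_mod_cast (Fact.out : p.Prime).pos
  -- column support cardinality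
  have hcol : ∀ P : {P : Polynomial (ZMod p) // P.degree < ((r + 1 : ℕ) : WithBot ℕ)},
      (Finset.univ.filter (fun xy : ZMod p × ZMod p => Φ xy P ≠ 0)).card = p := by
    intro P
    have himg : (Finset.univ.filter (fun xy : ZMod p × ZMod p => Φ xy P ≠ 0)) =
        Finset.univ.image (fun x : ZMod p => (x, (P : Polynomial (ZMod p)).eval x)) := by
      ext ⟨x, y⟩
      simp only [Finset.mem_filter, Finset.mem_univ, true_and, hΦ, Finset.mem_image, ne_eq]
      constructor
      · intro h
        have he : (P : Polynomial (ZMod p)).eval x = y := by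
          by_contra hc; simp [hc] at h
        exact ⟨x, by rw [he]⟩
      · rintro ⟨a, ha⟩
        rw [Prod.mk.injEq] at ha
        obtain ⟨rfl, rfl⟩ := ha
        simp
    rw [himg, Finset.card_image_of_injective _ (fun a b h => congrArg Prod.fst h)]
    simp [ZMod.card]
  -- intersection of supports
  have hinter : ∀ P Q : {P : Polynomial (ZMod p) // P.degree < ((r + 1 : ℕ) : WithBot ℕ)},
      P ≠ Q →
      (Finset.univ.filter
        (fun x : ZMod p =>
          (P : Polynomial (ZMod p)).eval x = (Q : Polynomial (ZMod p)).eval x)).card ≤ r := by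
    intro P Q hPQ
    set f : Polynomial (ZMod p) := (P : Polynomial (ZMod p)) - Q with hf
    have hf0 : f ≠ 0 := sub_ne_zero.mpr (fun h => hPQ (Subtype.ext h))
    have hdeg : f.degree < ((r + 1 : ℕ) : WithBot ℕ) :=
      lt_of_le_of_lt (Polynomial.degree_sub_le _ _) (max_lt P.2 Q.2)
    have hnd : f.natDegree ≤ r := by
      have := (Polynomial.natDegree_lt_iff_degree_lt (n := r + 1) hf0).mpr hdeg
      omega
    have hsub : (Finset.univ.filter
        (fun x : ZMod p =>
          (P : Polynomial (ZMod p)).eval x = (Q : Polynomial (ZMod p)).eval x))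
        ⊆ f.roots.toFinset := by
      intro x hx
      rw [Multiset.mem_toFinset, Polynomial.mem_roots hf0]
      simp only [Polynomial.IsRoot, hf, Polynomial.eval_sub, sub_eq_zero]
      exact (Finset.mem_filter.mp hx).2
    calc _ ≤ f.roots.toFinset.card := Finset.card_le_card hsub
      _ ≤ Multiset.card f.roots := Multiset.toFinset_card_le _
      _ ≤ f.natDegree := Polynomial.card_roots' f
      _ ≤ r := hnd
  refine ⟨?_, hcol, hinter, ?_⟩
  · intro P x
    refine ⟨(P : Polynomial (ZMod p)).eval x, ?_, ?_⟩
    · simp [hΦ]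
    · intro y hy
      by_contra hne
      exact hy (by simp [hΦ, show ¬ ((P : Polynomial (ZMod p)).eval x = y) from fun h => hne h.symm])
  · intro P Q hPQ
    -- sum of squares of a column equals p
    have hsq : ∀ R : {P : Polynomial (ZMod p) // P.degree < ((r + 1 : ℕ) : WithBot ℕ)},
        ∑ xy : ZMod p × ZMod p, (Φ xy R) ^ 2 = (p : ℝ) := by
      intro R
      have : ∀ xy : ZMod p × ZMod p, (Φ xy R) ^ 2 =
          if (R : Polynomial (ZMod p)).eval xy.1 = xy.2 then (1 : ℝ) else 0 := by
        intro xy; rw [hΦ]; split <;> norm_num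
      rw [Finset.sum_congr rfl (fun xy _ => this xy), Finset.sum_boole]
      have : (Finset.univ.filter (fun xy : ZMod p × ZMod p =>
          (R : Polynomial (ZMod p)).eval xy.1 = xy.2)) =
          (Finset.univ.filter (fun xy : ZMod p × ZMod p => Φ xy R ≠ 0)) := by
        ext xy; simp [hΦ]
      rw [this, hcol R]
    have hcross : ∑ xy : ZMod p × ZMod p, Φ xy P * Φ xy Q =
        ((Finset.univ.filter
          (fun x : ZMod p =>
            (P : Polynomial (ZMod p)).eval x = (Q : Polynomial (ZMod p)).eval x)).card : ℝ) := by
      rw [Fintype.sum_prod_type]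
      have hx : ∀ x : ZMod p, ∑ y : ZMod p, Φ (x, y) P * Φ (x, y) Q =
          if (P : Polynomial (ZMod p)).eval x = (Q : Polynomial (ZMod p)).eval x
          then (1 : ℝ) else 0 := by
        intro x
        simp only [hΦ]
        rw [Finset.sum_eq_single ((P : Polynomial (ZMod p)).eval x)]
        · simp [eq_comm]
        · intro y _ hy
          have : ¬ ((P : Polynomial (ZMod p)).eval x = y) := fun h => hy h.symm
          simp [this]
        · simp
      rw [Finset.sum_congr rfl (fun x _ => hx x), Finset.sum_boole]
    rw [hcross, hsq P, hsq Q, Real.mul_self_sqrt (le_of_lt hppos),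
      abs_of_nonneg (by positivity)]
    have hle : ((Finset.univ.filter
        (fun x : ZMod p =>
          (P : Polynomial (ZMod p)).eval x = (Q : Polynomial (ZMod p)).eval x)).card : ℝ)
        ≤ (r : ℝ) := by exact_mod_cast hinter P Q hPQ
    gcongr
end

section
/- Let Φ be an m × M real matrix, k ≥ 1, and 0 ≤ δ < √2 − 1, and suppose Φ satisfies the Restricted Isometry Property of order 2k with constant δ: for every v ∈ ℝ^M with at most 2k nonzero entries, (1−δ)‖v‖₂² ≤ ‖Φv‖₂² ≤ (1+δ)‖v‖₂². If x₀ ∈ ℝ^M has at most k nonzero entries, then x₀ is the unique ℓ₁-minimizer among solutions of the linear system: for every z ∈ ℝ^M with Φz = Φx₀ and z ≠ x₀, one has ‖x₀‖₁ < ‖z‖₁. -/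
open Finset

/-- Cross inner product bound from RIP. -/
theorem rip_cross {m M k : ℕ} (Φ : Matrix (Fin m) (Fin M) ℝ) (δ : ℝ) (hδ0 : 0 ≤ δ)
    (hRIP : ∀ v : Fin M → ℝ,
      (Finset.univ.filter (fun i => v i ≠ 0)).card ≤ 2 * k →
      (1 - δ) * ∑ i : Fin M, (v i) ^ 2
          ≤ ∑ x : Fin m, (Φ.mulVec v x) ^ 2 ∧
      ∑ x : Fin m, (Φ.mulVec v x) ^ 2
          ≤ (1 + δ) * ∑ i : Fin M, (v i) ^ 2)
    (u v : Fin M → ℝ)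
    (hdisj : ∀ i, u i = 0 ∨ v i = 0)
    (hcard : (Finset.univ.filter (fun i => u i ≠ 0)).card
        + (Finset.univ.filter (fun i => v i ≠ 0)).card ≤ 2 * k) :
    |∑ x : Fin m, Φ.mulVec u x * Φ.mulVec v x|
      ≤ δ * Real.sqrt (∑ i : Fin M, (u i) ^ 2) * Real.sqrt (∑ i : Fin M, (v i) ^ 2) := by
  set a := Real.sqrt (∑ i : Fin M, (u i) ^ 2) with ha
  set b := Real.sqrt (∑ i : Fin M, (v i) ^ 2) with hb
  have ha0 : 0 ≤ a := Real.sqrt_nonneg _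
  have hb0 : 0 ≤ b := Real.sqrt_nonneg _
  -- zero cases
  by_cases hua : ∑ i : Fin M, (u i) ^ 2 = 0
  · have hu0 : ∀ i, u i = 0 := by
      intro i
      have := (Finset.sum_eq_zero_iff_of_nonneg (fun i _ => sq_nonneg (u i))).1 hua i (mem_univ i)
      exact pow_eq_zero_iff (by norm_num) |>.1 this
    have : (fun i => u i) = (0 : Fin M → ℝ) := funext hu0
    have hmv : Φ.mulVec u = 0 := by
      have : u = (0 : Fin M → ℝ) := funext hu0
      rw [this, Matrix.mulVec_zero]
    simp [hmv]
    positivity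
  by_cases hvb : ∑ i : Fin M, (v i) ^ 2 = 0
  · have hv0 : ∀ i, v i = 0 := by
      intro i
      have := (Finset.sum_eq_zero_iff_of_nonneg (fun i _ => sq_nonneg (v i))).1 hvb i (mem_univ i)
      exact pow_eq_zero_iff (by norm_num) |>.1 this
    have hmv : Φ.mulVec v = 0 := by
      have : v = (0 : Fin M → ℝ) := funext hv0
      rw [this, Matrix.mulVec_zero]
    simp [hmv]
    positivity
  have hsu : 0 < ∑ i : Fin M, (u i) ^ 2 :=
    lt_of_le_of_ne (Finset.sum_nonneg fun i _ => sq_nonneg _) (Ne.symm hua)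
  have hsv : 0 < ∑ i : Fin M, (v i) ^ 2 :=
    lt_of_le_of_ne (Finset.sum_nonneg fun i _ => sq_nonneg _) (Ne.symm hvb)
  have hap : 0 < a := Real.sqrt_pos.2 hsu
  have hbp : 0 < b := Real.sqrt_pos.2 hsv
  have ha2 : a ^ 2 = ∑ i : Fin M, (u i) ^ 2 := Real.sq_sqrt hsu.le
  have hb2 : b ^ 2 = ∑ i : Fin M, (v i) ^ 2 := Real.sq_sqrt hsv.le
  -- scaled vectors
  set p : Fin M → ℝ := b • u + a • v with hp
  set q : Fin M → ℝ := b • u - a • v with hq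
  have hsupp : ∀ (w : Fin M → ℝ), (∀ i, w i ≠ 0 → u i ≠ 0 ∨ v i ≠ 0) →
      (Finset.univ.filter (fun i => w i ≠ 0)).card ≤ 2 * k := by
    intro w hw
    refine le_trans ?_ hcard
    calc (Finset.univ.filter (fun i => w i ≠ 0)).card
        ≤ ((Finset.univ.filter (fun i => u i ≠ 0)) ∪ (Finset.univ.filter (fun i => v i ≠ 0))).card := by
          apply Finset.card_le_card
          intro i hi
          simp only [mem_filter, mem_univ, true_and] at hi
          rcases hw i hi with h | h <;> simp [Finset.mem_union, h]
      _ ≤ _ := Finset.card_union_le _ _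
  have hpcard : (Finset.univ.filter (fun i => p i ≠ 0)).card ≤ 2 * k := by
    apply hsupp; intro i hi
    by_contra hcon
    push_neg at hcon
    apply hi; simp [hp, hcon.1, hcon.2]
  have hqcard : (Finset.univ.filter (fun i => q i ≠ 0)).card ≤ 2 * k := by
    apply hsupp; intro i hi
    by_contra hcon
    push_neg at hcon
    apply hi; simp [hq, hcon.1, hcon.2]
  -- norms of p and q
  have hcross0 : ∑ i : Fin M, u i * v i = 0 := by
    apply Finset.sum_eq_zero; intro i _
    rcases hdisj i with h | h <;> simp [h]
  have hpnorm : ∑ i : Fin M, (p i) ^ 2 = 2 * (a ^ 2 * b ^ 2) := by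
    simp only [hp, Pi.add_apply, Pi.smul_apply, smul_eq_mul]
    have : ∀ i, (b * u i + a * v i) ^ 2
        = b ^ 2 * u i ^ 2 + a ^ 2 * v i ^ 2 + 2 * a * b * (u i * v i) := by intro i; ring
    simp only [this]
    rw [Finset.sum_add_distrib, Finset.sum_add_distrib, ← Finset.mul_sum, ← Finset.mul_sum,
      ← Finset.mul_sum, hcross0, ← ha2, ← hb2]
    ring
  have hqnorm : ∑ i : Fin M, (q i) ^ 2 = 2 * (a ^ 2 * b ^ 2) := by
    simp only [hq, Pi.sub_apply, Pi.smul_apply, smul_eq_mul]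
    have : ∀ i, (b * u i - a * v i) ^ 2
        = b ^ 2 * u i ^ 2 + a ^ 2 * v i ^ 2 - 2 * a * b * (u i * v i) := by intro i; ring
    simp only [this]
    rw [Finset.sum_sub_distrib, Finset.sum_add_distrib, ← Finset.mul_sum, ← Finset.mul_sum,
      ← Finset.mul_sum, hcross0, ← ha2, ← hb2]
    ring
  -- mulVec of p, q
  have hmvp : ∀ x, Φ.mulVec p x = b * Φ.mulVec u x + a * Φ.mulVec v x := by
    intro x
    simp [hp, Matrix.mulVec_add, Matrix.mulVec_smul]
  have hmvq : ∀ x, Φ.mulVec q x = b * Φ.mulVec u x - a * Φ.mulVec v x := by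
    intro x
    simp [hq, Matrix.mulVec_sub, Matrix.mulVec_smul]
  have hdiff : ∑ x : Fin m, (Φ.mulVec p x) ^ 2 - ∑ x : Fin m, (Φ.mulVec q x) ^ 2
      = 4 * (a * b) * ∑ x : Fin m, Φ.mulVec u x * Φ.mulVec v x := by
    rw [← Finset.sum_sub_distrib, Finset.mul_sum]
    apply Finset.sum_congr rfl
    intro x _
    rw [hmvp, hmvq]; ring
  have hup := hRIP p hpcard
  have huq := hRIP q hqcard
  rw [hpnorm] at hup
  rw [hqnorm] at huq
  have h1 : ∑ x : Fin m, Φ.mulVec u x * Φ.mulVec v x ≤ δ * a * b := by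
    have := hdiff
    nlinarith [hup.2, huq.1, mul_pos hap hbp]
  have h2 : -(δ * a * b) ≤ ∑ x : Fin m, Φ.mulVec u x * Φ.mulVec v x := by
    nlinarith [hup.1, huq.2, mul_pos hap hbp]
  rw [abs_le]
  constructor
  · linarith
  · linarith


set_option maxHeartbeats 1000000 in
/-- Theorem 2.1 (Candès): if `Φ` satisfies the RIP of order `2k` with constant
`δ < √2 - 1`, then every `k`-sparse `x₀` is the unique ℓ₁-minimizer among the
solutions `z` of `Φ z = Φ x₀`. -/
theorem RIP_implies_l1_recovery
    (m M k : ℕ) (hk : 1 ≤ k)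
    (Φ : Matrix (Fin m) (Fin M) ℝ) (δ : ℝ)
    (hδ0 : 0 ≤ δ) (hδ : δ < Real.sqrt 2 - 1)
    (hRIP : ∀ v : Fin M → ℝ,
      (Finset.univ.filter (fun i => v i ≠ 0)).card ≤ 2 * k →
      (1 - δ) * ∑ i : Fin M, (v i) ^ 2
          ≤ ∑ x : Fin m, (Φ.mulVec v x) ^ 2 ∧
      ∑ x : Fin m, (Φ.mulVec v x) ^ 2
          ≤ (1 + δ) * ∑ i : Fin M, (v i) ^ 2)
    (x₀ : Fin M → ℝ)
    (hx₀ : (Finset.univ.filter (fun i => x₀ i ≠ 0)).card ≤ k) :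
    ∀ z : Fin M → ℝ, Φ.mulVec z = Φ.mulVec x₀ → z ≠ x₀ →
      ∑ i : Fin M, |x₀ i| < ∑ i : Fin M, |z i| := by
  intro z hz hne
  -- basic facts
  have hsqrt2 : (Real.sqrt 2) ^ 2 = 2 := Real.sq_sqrt (by norm_num)
  have hsqrt2pos : 0 < Real.sqrt 2 := Real.sqrt_pos.2 (by norm_num)
  have hsqrt2lt : Real.sqrt 2 < 2 := by nlinarith
  have hδ1 : δ < 1 := by linarith
  set h : Fin M → ℝ := fun i => z i - x₀ i with hh
  have hker : Φ.mulVec h = 0 := by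
    have : h = z - x₀ := rfl
    rw [this, Matrix.mulVec_sub, hz, sub_self]
  have hne0 : ∃ i, h i ≠ 0 := by
    by_contra hcon
    push_neg at hcon
    apply hne
    funext i
    have := hcon i
    simp only [hh] at this
    linarith [abs_nonneg (z i - x₀ i)]
  -- sparse vectors in the kernel are zero
  have hzero : ∀ v : Fin M → ℝ,
      (Finset.univ.filter (fun i => v i ≠ 0)).card ≤ 2 * k →
      Φ.mulVec v = 0 → ∀ i, v i = 0 := by
    intro v hcard hv i
    have h1 := (hRIP v hcard).1
    rw [hv] at h1
    simp only [Pi.zero_apply] at h1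
    have h2 : (1 - δ) * ∑ i : Fin M, (v i) ^ 2 ≤ 0 := by
      simpa using h1
    have h3 : 0 ≤ ∑ i : Fin M, (v i) ^ 2 := Finset.sum_nonneg fun i _ => sq_nonneg _
    have h4 : ∑ i : Fin M, (v i) ^ 2 = 0 := by nlinarith
    have := (Finset.sum_eq_zero_iff_of_nonneg (fun i _ => sq_nonneg (v i))).1 h4 i (mem_univ i)
    exact pow_eq_zero_iff (by norm_num) |>.1 this
  set C : ℝ := ∑ i : Fin M, |h i| with hC
  have hCb : ∀ i, |h i| ≤ C := by
    intro i
    exact Finset.single_le_sum (fun j _ => abs_nonneg (h j)) (mem_univ i)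
  have hCpos : 0 < C := by
    obtain ⟨i, hi⟩ := hne0
    exact lt_of_lt_of_le (abs_pos.2 hi) (hCb i)
  set K : Fin M → ℝ := fun i => if x₀ i ≠ 0 then -(C+1) else -|h i| with hK
  set σ : Equiv.Perm (Fin M) := Tuple.sort K with hσ
  have hmono : Monotone (K ∘ σ) := Tuple.monotone_sort K
  -- Fact B : beyond position k, x₀ ∘ σ vanishes
  have hB : ∀ p : Fin M, k ≤ (p : ℕ) → x₀ (σ p) = 0 := by
    intro p hp
    by_contra hx
    have hall : ∀ p' : Fin M, p' ≤ p → x₀ (σ p') ≠ 0 := by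
      intro p' hp'
      have h1 : K (σ p') ≤ K (σ p) := hmono hp'
      have h2 : K (σ p) = -(C+1) := by simp only [hK]; rw [if_pos hx]
      intro hz
      have h3 : K (σ p') = -|h (σ p')| := by simp only [hK]; rw [if_neg (by simpa using hz)]
      rw [h2, h3] at h1
      have := hCb (σ p')
      linarith
    have hinj : (Finset.Iic p).card ≤ (Finset.univ.filter (fun i => x₀ i ≠ 0)).card := by
      apply Finset.card_le_card_of_injOn σ
      · intro p' hp'
        simp only [Finset.mem_coe, mem_filter, mem_univ, true_and]
        exact hall p' (Finset.mem_Iic.1 hp')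
      · exact fun a _ b _ hab => σ.injective hab
    rw [Fin.card_Iic] at hinj
    omega
  -- G : sorted absolute values, extended by zero
  set G : ℕ → ℝ := fun p => if hp : p < M then |h (σ ⟨p, hp⟩)| else 0 with hG
  have hG0 : ∀ p, 0 ≤ G p := by
    intro p
    simp only [hG]
    split
    · exact abs_nonneg _
    · exact le_refl 0
  have hA : ∀ p q : ℕ, k ≤ p → p ≤ q → G q ≤ G p := by
    intro p q hkp hpq
    by_cases hq : q < M
    · have hpM : p < M := lt_of_le_of_lt hpq hq
      have hx₀p : x₀ (σ ⟨p, hpM⟩) = 0 := hB _ hkp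
      have hx₀q : x₀ (σ ⟨q, hq⟩) = 0 := hB _ (le_trans hkp hpq)
      have h1 : K (σ ⟨p, hpM⟩) ≤ K (σ ⟨q, hq⟩) := hmono (by exact hpq)
      have h2 : K (σ ⟨p, hpM⟩) = -|h (σ ⟨p, hpM⟩)| := by
        simp only [hK]; rw [if_neg (by simpa using hx₀p)]
      have h3 : K (σ ⟨q, hq⟩) = -|h (σ ⟨q, hq⟩)| := by
        simp only [hK]; rw [if_neg (by simpa using hx₀q)]
      simp only [hG, dif_pos hq, dif_pos hpM]
      rw [h2, h3] at h1
      linarith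
    · have : G q = 0 := by simp only [hG]; rw [dif_neg hq]
      rw [this]; exact hG0 p
  -- Block decomposition
  set N : ℕ := M + 2 with hN
  set u : ℕ → Fin M → ℝ := fun j i => if ((σ.symm i : ℕ) / k = j) then h i else 0 with hu
  have hBsum : ∀ i, ∑ j ∈ Finset.range N, u j i = h i := by
    intro i
    rw [Finset.sum_eq_single ((σ.symm i : ℕ) / k)]
    · simp [hu]
    · intro j _ hj
      simp [hu, Ne.symm hj]
    · intro hnot
      exfalso
      apply hnot
      rw [Finset.mem_range]
      have : (σ.symm i : ℕ) < M := (σ.symm i).isLt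
      have := Nat.div_le_self (σ.symm i : ℕ) k
      omega
  have hband : ∀ (j : ℕ) (i : Fin M), u j i ≠ 0 → j * k ≤ (σ.symm i : ℕ) ∧ (σ.symm i : ℕ) < j * k + k := by
    intro j i hi
    have hcond : (σ.symm i : ℕ) / k = j := by
      by_contra hc
      simp [hu, hc] at hi
    have hmod := Nat.div_add_mod (σ.symm i : ℕ) k
    rw [hcond] at hmod
    have hmc : j * k = k * j := Nat.mul_comm j k
    have hlt : (σ.symm i : ℕ) % k < k := Nat.mod_lt _ (by omega)
    omega
  have hsuppcard : ∀ j : ℕ, (Finset.univ.filter (fun i => u j i ≠ 0)).card ≤ k := by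
    intro j
    have : (Finset.univ.filter (fun i => u j i ≠ 0)).card
        ≤ (Finset.Ico (j * k) (j * k + k)).card := by
      apply Finset.card_le_card_of_injOn (fun i => (σ.symm i : ℕ))
      · intro i hi
        simp only [Finset.mem_coe, mem_filter, mem_univ, true_and] at hi ⊢
        rw [Finset.mem_Ico]
        exact hband j i hi
      · intro a _ b _ hab
        exact σ.symm.injective (Fin.val_injective hab)
    rwa [Nat.card_Ico, Nat.add_sub_cancel_left] at this
  have hdisjU : ∀ j j' : ℕ, j ≠ j' → ∀ i, u j i = 0 ∨ u j' i = 0 := by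
    intro j j' hjj i
    by_cases hc : (σ.symm i : ℕ) / k = j
    · right; simp [hu, hc ▸ hjj, hc]
      intro hc'
      exact absurd (hc ▸ hc' : j = j').symm (Ne.symm hjj)
    · left; simp [hu, hc]
  -- ℓ1 and ℓ2 block sums expressed via G
  have hblock : ∀ (j : ℕ) (F : ℝ → ℝ), F 0 = 0 →
      ∑ i : Fin M, F (|u j i|) = ∑ p ∈ Finset.Ico (j * k) (j * k + k), F (G p) := by
    intro j F hF0
    have step1 : ∑ i : Fin M, F (|u j i|)
        = ∑ p : Fin M, (if ((p : ℕ) / k = j) then F (|h (σ p)|) else 0) := by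
      rw [← Equiv.sum_comp σ (fun i => F (|u j i|))]
      apply Finset.sum_congr rfl
      intro p _
      simp only [hu, Equiv.symm_apply_apply]
      split
      · rfl
      · simp [hF0]
    have step2 : ∑ p : Fin M, (if ((p : ℕ) / k = j) then F (|h (σ p)|) else 0)
        = ∑ p ∈ Finset.range M, (if (p / k = j) then F (G p) else 0) := by
      rw [← Fin.sum_univ_eq_sum_range (fun p => if p / k = j then F (G p) else 0) M]
      apply Finset.sum_congr rfl
      intro p _
      have hGp : G (p : ℕ) = |h (σ p)| := by
        simp only [hG]
        rw [dif_pos p.isLt]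
      rw [hGp]
    have step3 : ∑ p ∈ Finset.range M, (if (p / k = j) then F (G p) else 0)
        = ∑ p ∈ Finset.Ico (j * k) (j * k + k), F (G p) := by
      rw [← Finset.sum_filter]
      apply Finset.sum_subset
      · intro p hp
        simp only [Finset.mem_filter, Finset.mem_range] at hp
        rw [Finset.mem_Ico]
        have hmod := Nat.div_add_mod p k
        rw [hp.2] at hmod
        have hmc : j * k = k * j := Nat.mul_comm j k
        have hlt : p % k < k := Nat.mod_lt _ (by omega)
        omega
      · intro p hp hnp
        have hpM : ¬ p < M := by
          intro hcon
          apply hnp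
          simp only [Finset.mem_filter, Finset.mem_range]
          refine ⟨hcon, ?_⟩
          rw [Finset.mem_Ico] at hp
          exact Nat.div_eq_of_lt_le (by omega) (by rw [Nat.succ_mul]; omega)
        have : G p = 0 := by simp only [hG]; rw [dif_neg hpM]
        rw [this, hF0]
    rw [step1, step2, step3]
  set n1 : ℕ → ℝ := fun j => ∑ p ∈ Finset.Ico (j * k) (j * k + k), G p with hn1def
  set n2sq : ℕ → ℝ := fun j => ∑ p ∈ Finset.Ico (j * k) (j * k + k), (G p) ^ 2 with hn2sqdef
  have hn1 : ∀ j, ∑ i : Fin M, |u j i| = n1 j := by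
    intro j
    exact hblock j (fun x => x) rfl
  have hn2 : ∀ j, ∑ i : Fin M, (u j i) ^ 2 = n2sq j := by
    intro j
    have := hblock j (fun x => x ^ 2) (by norm_num)
    simpa [sq_abs] using this
  have hn1nn : ∀ j, 0 ≤ n1 j := fun j => Finset.sum_nonneg fun p _ => hG0 p
  have hn2sqnn : ∀ j, 0 ≤ n2sq j := fun j => Finset.sum_nonneg fun p _ => sq_nonneg _
  have htotal : ∑ j ∈ Finset.range N, n1 j = C := by
    simp only [← hn1]
    rw [Finset.sum_comm]
    rw [hC]
    apply Finset.sum_congr rfl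
    intro i _
    rw [Finset.sum_eq_single ((σ.symm i : ℕ) / k)]
    · simp [hu]
    · intro j _ hj
      simp [hu, Ne.symm hj]
    · intro hnot
      exfalso
      apply hnot
      rw [Finset.mem_range]
      have h1 : (σ.symm i : ℕ) < M := (σ.symm i).isLt
      have h2 := Nat.div_le_self (σ.symm i : ℕ) k
      omega
  -- key averaging bound
  have hkpos : (0:ℝ) < k := by exact_mod_cast hk
  have hkey : ∀ j : ℕ, 1 ≤ j → ∀ p : ℕ, (j+1) * k ≤ p → (k:ℝ) * G p ≤ n1 j := by
    intro j hj p hp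
    have : (Finset.Ico (j * k) (j * k + k)).card • G p ≤ ∑ q ∈ Finset.Ico (j * k) (j * k + k), G q := by
      apply Finset.card_nsmul_le_sum
      intro q hq
      rw [Finset.mem_Ico] at hq
      apply hA q p
      · calc k = 1 * k := (one_mul k).symm
          _ ≤ j * k := Nat.mul_le_mul_right k hj
          _ ≤ q := hq.1
      · have : q < (j + 1) * k := by rw [Nat.succ_mul]; omega
        omega
    rwa [Nat.card_Ico, Nat.add_sub_cancel_left, nsmul_eq_mul] at this
  have hn1mono : ∀ j : ℕ, 1 ≤ j → n1 (j+1) ≤ n1 j := by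
    intro j hj
    calc n1 (j+1) = ∑ p ∈ Finset.Ico ((j+1) * k) ((j+1) * k + k), G p := rfl
      _ ≤ ∑ p ∈ Finset.Ico ((j+1) * k) ((j+1) * k + k), n1 j / k := by
          apply Finset.sum_le_sum
          intro p hp
          rw [Finset.mem_Ico] at hp
          rw [le_div_iff₀ hkpos]
          rw [mul_comm]
          exact hkey j hj p hp.1
      _ = n1 j := by
          rw [Finset.sum_const, Nat.card_Ico, Nat.add_sub_cancel_left, nsmul_eq_mul]
          field_simp
  have hn2sq_le : ∀ j : ℕ, 1 ≤ j → n2sq (j+1) ≤ n1 j ^ 2 / k := by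
    intro j hj
    calc n2sq (j+1) = ∑ p ∈ Finset.Ico ((j+1) * k) ((j+1) * k + k), (G p) ^ 2 := rfl
      _ ≤ ∑ p ∈ Finset.Ico ((j+1) * k) ((j+1) * k + k), G p * (n1 j / k) := by
          apply Finset.sum_le_sum
          intro p hp
          rw [Finset.mem_Ico] at hp
          rw [sq]
          apply mul_le_mul_of_nonneg_left _ (hG0 p)
          rw [le_div_iff₀ hkpos, mul_comm]
          exact hkey j hj p hp.1
      _ = n1 (j+1) * (n1 j / k) := by rw [← Finset.sum_mul]
      _ ≤ n1 j * (n1 j / k) := by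
          apply mul_le_mul_of_nonneg_right (hn1mono j hj)
          exact div_nonneg (hn1nn j) hkpos.le
      _ = n1 j ^ 2 / k := by ring
  set n2 : ℕ → ℝ := fun j => Real.sqrt (n2sq j) with hn2def
  have hn2nn : ∀ j, 0 ≤ n2 j := fun j => Real.sqrt_nonneg _
  have hsqrtk : 0 < Real.sqrt k := Real.sqrt_pos.2 hkpos
  have hn2_le : ∀ j : ℕ, 1 ≤ j → n2 (j+1) ≤ n1 j / Real.sqrt k := by
    intro j hj
    have h1 : n2 (j+1) ≤ Real.sqrt (n1 j ^ 2 / k) := Real.sqrt_le_sqrt (hn2sq_le j hj)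
    rwa [Real.sqrt_div (sq_nonneg _), Real.sqrt_sq (hn1nn j)] at h1
  set R : ℝ := ∑ j ∈ Finset.Ico 1 N, n1 j with hR
  have hRnn : 0 ≤ R := Finset.sum_nonneg fun j _ => hn1nn j
  have hQsum : ∑ j ∈ Finset.Ico 2 N, n2 j ≤ R / Real.sqrt k := by
    rw [Finset.sum_Ico_eq_sum_range]
    calc ∑ i ∈ Finset.range (N - 2), n2 (2 + i)
        ≤ ∑ i ∈ Finset.range (N - 2), n1 (1 + i) / Real.sqrt k := by
          apply Finset.sum_le_sum
          intro i _
          have : 2 + i = (1 + i) + 1 := by omega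
          rw [this]
          exact hn2_le (1 + i) (by omega)
      _ = (∑ i ∈ Finset.range (N - 2), n1 (1 + i)) / Real.sqrt k := by
          rw [Finset.sum_div]
      _ ≤ R / Real.sqrt k := by
          gcongr
          have he : ∑ j ∈ Finset.Ico 1 (N - 1), n1 j = ∑ i ∈ Finset.range (N - 2), n1 (1 + i) := by
            rw [Finset.sum_Ico_eq_sum_range]
            have h2 : N - 1 - 1 = N - 2 := by omega
            rw [h2]
          rw [← he, hR]
          apply Finset.sum_le_sum_of_subset_of_nonneg
          · apply Finset.Ico_subset_Ico le_rfl
            omega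
          · intro j _ _
            exact hn1nn j
  -- the vector w = u 0 + u 1
  set w : Fin M → ℝ := fun i => u 0 i + u 1 i with hw
  have hwsupp : (Finset.univ.filter (fun i => w i ≠ 0)).card ≤ 2 * k := by
    have hsub : (Finset.univ.filter (fun i => w i ≠ 0))
        ⊆ (Finset.univ.filter (fun i => u 0 i ≠ 0)) ∪ (Finset.univ.filter (fun i => u 1 i ≠ 0)) := by
      intro i hi
      simp only [mem_filter, mem_univ, true_and, Finset.mem_union] at hi ⊢
      by_contra hcon
      push_neg at hcon
      apply hi
      simp [hw, hcon.1, hcon.2]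
    calc (Finset.univ.filter (fun i => w i ≠ 0)).card
        ≤ ((Finset.univ.filter (fun i => u 0 i ≠ 0)) ∪ (Finset.univ.filter (fun i => u 1 i ≠ 0))).card :=
          Finset.card_le_card hsub
      _ ≤ (Finset.univ.filter (fun i => u 0 i ≠ 0)).card + (Finset.univ.filter (fun i => u 1 i ≠ 0)).card :=
          Finset.card_union_le _ _
      _ ≤ k + k := Nat.add_le_add (hsuppcard 0) (hsuppcard 1)
      _ = 2 * k := by ring
  have hwsq : ∑ i : Fin M, (w i) ^ 2 = n2sq 0 + n2sq 1 := by
    have hpt : ∀ i, (w i) ^ 2 = (u 0 i) ^ 2 + (u 1 i) ^ 2 := by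
      intro i
      rcases hdisjU 0 1 (by norm_num) i with h0 | h0 <;> simp [hw, h0]
    simp only [hpt]
    rw [Finset.sum_add_distrib, hn2 0, hn2 1]
  set W : ℝ := Real.sqrt (∑ i : Fin M, (w i) ^ 2) with hW
  have hwsqnn : 0 ≤ ∑ i : Fin M, (w i) ^ 2 := Finset.sum_nonneg fun i _ => sq_nonneg _
  have hWnn : 0 ≤ W := Real.sqrt_nonneg _
  have hW2 : W ^ 2 = ∑ i : Fin M, (w i) ^ 2 := Real.sq_sqrt hwsqnn
  have hn2sq_eq : ∀ j, (n2 j) ^ 2 = n2sq j := fun j => Real.sq_sqrt (hn2sqnn j)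
  have hn20W : n2 0 ≤ W := by
    apply Real.sqrt_le_sqrt
    rw [hwsq]
    linarith [hn2sqnn 1]
  have hsum01 : n2 0 + n2 1 ≤ Real.sqrt 2 * W := by
    have h1 : (n2 0 + n2 1) ^ 2 ≤ 2 * (∑ i : Fin M, (w i) ^ 2) := by
      rw [hwsq]
      nlinarith [hn2sq_eq 0, hn2sq_eq 1, hn2nn 0, hn2nn 1, sq_nonneg (n2 0 - n2 1)]
    have h2 := Real.sqrt_le_sqrt h1
    rwa [Real.sqrt_sq (by positivity), Real.sqrt_mul (by norm_num : (0:ℝ) ≤ 2)] at h2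
  -- mulVec of a sum
  have hmv_sum : ∀ (s : Finset ℕ) (f : ℕ → Fin M → ℝ) (x : Fin m),
      Φ.mulVec (fun i => ∑ j ∈ s, f j i) x = ∑ j ∈ s, Φ.mulVec (f j) x := by
    intro s f x
    simp only [Matrix.mulVec, dotProduct, Finset.mul_sum]
    exact Finset.sum_comm
  have hmvw : ∀ x, Φ.mulVec w x = Φ.mulVec (u 0) x + Φ.mulVec (u 1) x := by
    intro x
    have hwe : w = (u 0) + (u 1) := by funext i; simp [hw]
    rw [hwe, Matrix.mulVec_add]
    rfl
  have hdecomp : ∀ x, Φ.mulVec w x = - ∑ j ∈ Finset.Ico 2 N, Φ.mulVec (u j) x := by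
    intro x
    have hsum : h = w + fun i => ∑ j ∈ Finset.Ico 2 N, u j i := by
      funext i
      show h i = w i + ∑ j ∈ Finset.Ico 2 N, u j i
      rw [← hBsum i, Finset.range_eq_Ico,
        ← Finset.sum_Ico_consecutive _ (by omega : 0 ≤ 2) (by omega : 2 ≤ N)]
      congr 1
      rw [← Finset.range_eq_Ico, Finset.sum_range_succ, Finset.sum_range_one]
    have h0 : Φ.mulVec h x = 0 := by rw [hker]; rfl
    rw [hsum, Matrix.mulVec_add] at h0
    have h1 : Φ.mulVec w x + Φ.mulVec (fun i => ∑ j ∈ Finset.Ico 2 N, u j i) x = 0 := h0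
    rw [hmv_sum] at h1
    linarith
  have hfold : ∀ j, Real.sqrt (n2sq j) = n2 j := fun j => rfl
  -- the main RIP estimate
  have hPhiW : (1 - δ) * W ^ 2 ≤ Real.sqrt 2 * δ * W * (R / Real.sqrt k) := by
    have hrip1 := (hRIP w hwsupp).1
    rw [← hW2] at hrip1
    have hA1 : ∑ x : Fin m, (Φ.mulVec w x) ^ 2
        = - ∑ j ∈ Finset.Ico 2 N, ∑ x : Fin m, Φ.mulVec w x * Φ.mulVec (u j) x := by
      have hx : ∀ x, (Φ.mulVec w x) ^ 2
          = ∑ j ∈ Finset.Ico 2 N, -(Φ.mulVec w x * Φ.mulVec (u j) x) := by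
        intro x
        rw [sq]
        nth_rewrite 2 [hdecomp x]
        rw [mul_neg, Finset.mul_sum, Finset.sum_neg_distrib]
      simp only [hx]
      rw [Finset.sum_comm]
      simp only [Finset.sum_neg_distrib]
    have hA2 : ∀ j ∈ Finset.Ico 2 N,
        |∑ x : Fin m, Φ.mulVec w x * Φ.mulVec (u j) x| ≤ δ * (n2 0 + n2 1) * n2 j := by
      intro j hj
      rw [Finset.mem_Ico] at hj
      have hsplitx : ∀ x, Φ.mulVec w x * Φ.mulVec (u j) x
          = Φ.mulVec (u 0) x * Φ.mulVec (u j) x + Φ.mulVec (u 1) x * Φ.mulVec (u j) x := by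
        intro x; rw [hmvw]; ring
      have hc0 := rip_cross Φ δ hδ0 hRIP (u 0) (u j) (hdisjU 0 j (by omega))
        (le_trans (Nat.add_le_add (hsuppcard 0) (hsuppcard j)) (by omega))
      have hc1 := rip_cross Φ δ hδ0 hRIP (u 1) (u j) (hdisjU 1 j (by omega))
        (le_trans (Nat.add_le_add (hsuppcard 1) (hsuppcard j)) (by omega))
      rw [hn2 0, hn2 j, hfold, hfold] at hc0
      rw [hn2 1, hn2 j, hfold, hfold] at hc1
      calc |∑ x : Fin m, Φ.mulVec w x * Φ.mulVec (u j) x|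
          = |∑ x : Fin m, Φ.mulVec (u 0) x * Φ.mulVec (u j) x
              + ∑ x : Fin m, Φ.mulVec (u 1) x * Φ.mulVec (u j) x| := by
            rw [← Finset.sum_add_distrib]
            congr 1
            exact Finset.sum_congr rfl fun x _ => hsplitx x
        _ ≤ |∑ x : Fin m, Φ.mulVec (u 0) x * Φ.mulVec (u j) x|
              + |∑ x : Fin m, Φ.mulVec (u 1) x * Φ.mulVec (u j) x| := abs_add_le _ _
        _ ≤ δ * n2 0 * n2 j + δ * n2 1 * n2 j := add_le_add hc0 hc1
        _ = δ * (n2 0 + n2 1) * n2 j := by ring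
    calc (1 - δ) * W ^ 2 ≤ ∑ x : Fin m, (Φ.mulVec w x) ^ 2 := hrip1
      _ = - ∑ j ∈ Finset.Ico 2 N, ∑ x : Fin m, Φ.mulVec w x * Φ.mulVec (u j) x := hA1
      _ ≤ |∑ j ∈ Finset.Ico 2 N, ∑ x : Fin m, Φ.mulVec w x * Φ.mulVec (u j) x| := neg_le_abs _
      _ ≤ ∑ j ∈ Finset.Ico 2 N, |∑ x : Fin m, Φ.mulVec w x * Φ.mulVec (u j) x| :=
            Finset.abs_sum_le_sum_abs _ _
      _ ≤ ∑ j ∈ Finset.Ico 2 N, δ * (n2 0 + n2 1) * n2 j := Finset.sum_le_sum hA2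
      _ = δ * (n2 0 + n2 1) * ∑ j ∈ Finset.Ico 2 N, n2 j := by rw [Finset.mul_sum]
      _ ≤ δ * (Real.sqrt 2 * W) * (R / Real.sqrt k) := by
            apply mul_le_mul
            · exact mul_le_mul_of_nonneg_left hsum01 hδ0
            · exact hQsum
            · exact Finset.sum_nonneg fun j _ => hn2nn j
            · exact mul_nonneg hδ0 (mul_nonneg (Real.sqrt_nonneg 2) hWnn)
      _ = Real.sqrt 2 * δ * W * (R / Real.sqrt k) := by ring
  -- Cauchy–Schwarz on the head block
  have hn1_0 : n1 0 ≤ Real.sqrt k * n2 0 := by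
    have hcs : (∑ p ∈ Finset.Ico (0 * k) (0 * k + k), G p) ^ 2
        ≤ ((Finset.Ico (0 * k) (0 * k + k)).card : ℝ)
          * ∑ p ∈ Finset.Ico (0 * k) (0 * k + k), (G p) ^ 2 := sq_sum_le_card_mul_sum_sq
    have hcard : ((Finset.Ico (0 * k) (0 * k + k)).card : ℝ) = (k : ℝ) := by
      rw [Nat.card_Ico]
      norm_num
    rw [hcard] at hcs
    have h1 : (n1 0) ^ 2 ≤ (k : ℝ) * n2sq 0 := hcs
    have h2 : n1 0 = Real.sqrt ((n1 0) ^ 2) := (Real.sqrt_sq (hn1nn 0)).symm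
    rw [h2]
    calc Real.sqrt ((n1 0) ^ 2) ≤ Real.sqrt ((k : ℝ) * n2sq 0) := Real.sqrt_le_sqrt h1
      _ = Real.sqrt k * n2 0 := by rw [Real.sqrt_mul hkpos.le, hfold]
  have hn1_0W : n1 0 ≤ Real.sqrt k * W :=
    le_trans hn1_0 (mul_le_mul_of_nonneg_left hn20W hsqrtk.le)
  -- head ℓ1 norm is strictly less than tail ℓ1 norm
  have hCsplit : C = n1 0 + R := by
    rw [← htotal, hR, Finset.range_eq_Ico,
      ← Finset.sum_Ico_consecutive _ (by omega : 0 ≤ 1) (by omega : 1 ≤ N)]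
    congr 1
    rw [← Finset.range_eq_Ico, Finset.sum_range_one]
  have hkeyNSP : n1 0 < R := by
    by_cases hR0 : R = 0
    · exfalso
      have hjz : ∀ j ∈ Finset.Ico 1 N, n1 j = 0 := by
        intro j hj
        exact (Finset.sum_eq_zero_iff_of_nonneg (fun j _ => hn1nn j)).1 (hR.symm.trans hR0) j hj
      have hheq : ∀ i, h i = u 0 i := by
        intro i
        rw [← hBsum i, Finset.range_eq_Ico,
          ← Finset.sum_Ico_consecutive _ (by omega : 0 ≤ 1) (by omega : 1 ≤ N)]
        have e1 : ∑ j ∈ Finset.Ico 0 1, u j i = u 0 i := by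
          rw [← Finset.range_eq_Ico, Finset.sum_range_one]
        have e2 : ∑ j ∈ Finset.Ico 1 N, u j i = 0 := by
          apply Finset.sum_eq_zero
          intro j hj
          have hb : |u j i| ≤ n1 j := by
            rw [← hn1 j]
            exact Finset.single_le_sum (fun i' _ => abs_nonneg (u j i')) (mem_univ i)
          rw [hjz j hj] at hb
          have := abs_nonneg (u j i)
          have : |u j i| = 0 := le_antisymm hb this
          exact abs_eq_zero.1 this
        rw [e1, e2, add_zero]
      have hhcard : (Finset.univ.filter (fun i => h i ≠ 0)).card ≤ 2 * k := by
        have hsub : (Finset.univ.filter (fun i => h i ≠ 0))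
            ⊆ (Finset.univ.filter (fun i => u 0 i ≠ 0)) := by
          intro i hi
          simp only [mem_filter, mem_univ, true_and] at hi ⊢
          rwa [← hheq]
        calc (Finset.univ.filter (fun i => h i ≠ 0)).card
            ≤ (Finset.univ.filter (fun i => u 0 i ≠ 0)).card := Finset.card_le_card hsub
          _ ≤ k := hsuppcard 0
          _ ≤ 2 * k := by omega
      obtain ⟨i, hi⟩ := hne0
      exact hi (hzero h hhcard hker i)
    · have hRpos : 0 < R := lt_of_le_of_ne hRnn (Ne.symm hR0)
      by_cases hW0 : W = 0
      · have hn20z : n2 0 = 0 := le_antisymm (hW0 ▸ hn20W) (hn2nn 0)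
        have : n1 0 ≤ 0 := by
          have := hn1_0
          rw [hn20z, mul_zero] at this
          exact this
        have : n1 0 = 0 := le_antisymm this (hn1nn 0)
        rw [this]
        exact hRpos
      · have hWpos : 0 < W := lt_of_le_of_ne hWnn (Ne.symm hW0)
        have h1 : (1 - δ) * W ≤ Real.sqrt 2 * δ * (R / Real.sqrt k) := by
          have h2 := hPhiW
          nlinarith [hWpos]
        have h2 : n1 0 ≤ Real.sqrt 2 * δ / (1 - δ) * R := by
          have h3 : W ≤ Real.sqrt 2 * δ * (R / Real.sqrt k) / (1 - δ) := by
            rw [le_div_iff₀ (by linarith : (0:ℝ) < 1 - δ)]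
            linarith [h1]
          have h4 : n1 0 ≤ Real.sqrt k * (Real.sqrt 2 * δ * (R / Real.sqrt k) / (1 - δ)) :=
            le_trans hn1_0W (mul_le_mul_of_nonneg_left h3 hsqrtk.le)
          have h5 : Real.sqrt k * (Real.sqrt 2 * δ * (R / Real.sqrt k) / (1 - δ))
              = Real.sqrt 2 * δ / (1 - δ) * R := by
            have hkne : Real.sqrt k ≠ 0 := ne_of_gt hsqrtk
            have hdne : (1:ℝ) - δ ≠ 0 := by linarith
            field_simp
          rwa [h5] at h4
      -- ρ < 1
        have h6 : Real.sqrt 2 * δ / (1 - δ) < 1 := by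
          rw [div_lt_one (by linarith : (0:ℝ) < 1 - δ)]
          nlinarith [hsqrt2, hsqrt2pos]
        calc n1 0 ≤ Real.sqrt 2 * δ / (1 - δ) * R := h2
          _ < 1 * R := by
              apply mul_lt_mul_of_pos_right h6 hRpos
          _ = R := one_mul R
  -- transfer to the support of x₀
  have hSsub : ∀ i ∈ Finset.univ.filter (fun i => x₀ i ≠ 0), u 0 i = h i := by
    intro i hi
    simp only [mem_filter, mem_univ, true_and] at hi
    have hpos : (σ.symm i : ℕ) < k := by
      by_contra hcon
      push_neg at hcon
      have := hB (σ.symm i) hcon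
      rw [Equiv.apply_symm_apply] at this
      exact hi this
    simp [hu, Nat.div_eq_of_lt hpos]
  have hheadS : ∑ i ∈ Finset.univ.filter (fun i => x₀ i ≠ 0), |h i| ≤ n1 0 := by
    rw [← hn1 0]
    calc ∑ i ∈ Finset.univ.filter (fun i => x₀ i ≠ 0), |h i|
        = ∑ i ∈ Finset.univ.filter (fun i => x₀ i ≠ 0), |u 0 i| :=
          Finset.sum_congr rfl fun i hi => by rw [hSsub i hi]
      _ ≤ ∑ i : Fin M, |u 0 i| :=
          Finset.sum_le_sum_of_subset_of_nonneg (Finset.subset_univ _)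
            (fun i _ _ => abs_nonneg _)
  have hsdiff : ∑ i ∈ Finset.univ \ Finset.univ.filter (fun i => x₀ i ≠ 0), |h i|
      + ∑ i ∈ Finset.univ.filter (fun i => x₀ i ≠ 0), |h i| = C := by
    rw [hC]
    exact Finset.sum_sdiff (Finset.subset_univ _)
  have htailS : R ≤ ∑ i ∈ Finset.univ \ Finset.univ.filter (fun i => x₀ i ≠ 0), |h i| := by
    have := hsdiff
    rw [hCsplit] at this
    linarith [hheadS]
  have hNSP : ∑ i ∈ Finset.univ.filter (fun i => x₀ i ≠ 0), |h i|
      < ∑ i ∈ Finset.univ \ Finset.univ.filter (fun i => x₀ i ≠ 0), |h i| :=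
    lt_of_le_of_lt hheadS (lt_of_lt_of_le hkeyNSP htailS)
  -- conclusion
  have hx₀split : ∑ i : Fin M, |x₀ i| = ∑ i ∈ Finset.univ.filter (fun i => x₀ i ≠ 0), |x₀ i| := by
    symm
    apply Finset.sum_subset (Finset.subset_univ _)
    intro i _ hi
    simp only [mem_filter, mem_univ, true_and, not_not] at hi
    rw [hi, abs_zero]
  have hzsplit : ∑ i : Fin M, |z i|
      = ∑ i ∈ Finset.univ \ Finset.univ.filter (fun i => x₀ i ≠ 0), |z i|
        + ∑ i ∈ Finset.univ.filter (fun i => x₀ i ≠ 0), |z i| :=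
    (Finset.sum_sdiff (Finset.subset_univ _)).symm
  have hzoff : ∀ i ∈ Finset.univ \ Finset.univ.filter (fun i => x₀ i ≠ 0), |z i| = |h i| := by
    intro i hi
    rw [Finset.mem_sdiff, mem_filter] at hi
    have hx0i : x₀ i = 0 := by
      by_contra hc
      exact hi.2 ⟨mem_univ i, hc⟩
    show |z i| = |z i - x₀ i|
    rw [hx0i, sub_zero]
  have hzon : ∀ i, |x₀ i| - |h i| ≤ |z i| := by
    intro i
    have : z i = x₀ i + h i := by show z i = x₀ i + (z i - x₀ i); ring
    rw [this]
    calc |x₀ i| - |h i| ≤ |x₀ i + h i| := by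
          have := abs_add_le (x₀ i + h i) (-h i)
          simp only [add_neg_cancel_right, abs_neg] at this
          linarith
      _ = |x₀ i + h i| := rfl
  calc ∑ i : Fin M, |x₀ i| = ∑ i ∈ Finset.univ.filter (fun i => x₀ i ≠ 0), |x₀ i| := hx₀split
    _ < ∑ i ∈ Finset.univ.filter (fun i => x₀ i ≠ 0), (|x₀ i| - |h i|)
        + ∑ i ∈ Finset.univ \ Finset.univ.filter (fun i => x₀ i ≠ 0), |h i| := by
        rw [Finset.sum_sub_distrib]
        linarith [hNSP]
    _ ≤ ∑ i ∈ Finset.univ.filter (fun i => x₀ i ≠ 0), |z i|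
        + ∑ i ∈ Finset.univ \ Finset.univ.filter (fun i => x₀ i ≠ 0), |z i| := by
        apply add_le_add
        · exact Finset.sum_le_sum fun i _ => hzon i
        · apply le_of_eq
          exact (Finset.sum_congr rfl hzoff).symm
    _ = ∑ i : Fin M, |z i| := by rw [hzsplit]; ring
end
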